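/- arXiv:math/0504304 — 7 statements merged into one kernel-verified Lean document; each statement's English description precedes it below -/
import Mathlib

section
/- Let H be a complex Hilbert space, R₁, R₂ ∈ B(H) selfadjoint and nonnegative, and A ∈ B(H). The following are equivalent: (i) there exists B ∈ B(H) with ‖B‖ ≤ 1, ker B ⊇ ker R₁, ran B ⊆ closure(ran R₂), and A = R₂·B·R₁; (ii) 2|⟨Af, g⟩| ≤ ⟨R₁²f, f⟩ + ⟨R₂²g, g⟩ for all f, g ∈ H; (iii) |⟨Af, g⟩| ≤ ‖R₁ f‖·‖R₂ g‖ for all f, g ∈ H. -/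
open ContinuousLinearMap Complex
open scoped InnerProductSpace

noncomputable section

/-- Positive square root of a (nonnegative selfadjoint) bounded operator,
via the continuous functional calculus. -/
def opSqrt {H : Type*} [NormedAddCommGroup H] [InnerProductSpace ℂ H] [CompleteSpace H]
    (A : H →L[ℂ] H) : H →L[ℂ] H :=
  cfc Real.sqrt A

/-- Defect operator `D_T = (I - T*T)^{1/2}` of a contraction `T`. -/
def defectOp {H K : Type*} [NormedAddCommGroup H] [InnerProductSpace ℂ H] [CompleteSpace H]
    [NormedAddCommGroup K] [InnerProductSpace ℂ K] [CompleteSpace K] (T : H →L[ℂ] K) :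
    H →L[ℂ] H :=
  opSqrt (1 - (ContinuousLinearMap.adjoint T).comp T)

/-- Defect operator `D_{T*} = (I - TT*)^{1/2}` of a contraction `T`. -/
def codefectOp {H K : Type*} [NormedAddCommGroup H] [InnerProductSpace ℂ H] [CompleteSpace H]
    [NormedAddCommGroup K] [InnerProductSpace ℂ K] [CompleteSpace K] (T : H →L[ℂ] K) :
    K →L[ℂ] K :=
  opSqrt (1 - T.comp (ContinuousLinearMap.adjoint T))

/-- The class `C_H(φ)`: `‖T sin φ + i cos φ I‖ ≤ 1` and `‖T sin φ - i cos φ I‖ ≤ 1`. -/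
def CHclass {H : Type*} [NormedAddCommGroup H] [InnerProductSpace ℂ H] [CompleteSpace H]
    (φ : ℝ) (T : H →L[ℂ] H) : Prop :=
  ‖(Real.sin φ : ℂ) • T + (Complex.I * (Real.cos φ : ℂ)) • 1‖ ≤ 1 ∧
  ‖(Real.sin φ : ℂ) • T - (Complex.I * (Real.cos φ : ℂ)) • 1‖ ≤ 1

section Helpers
set_option linter.unusedSectionVars false

variable {H : Type*} [NormedAddCommGroup H] [InnerProductSpace ℂ H] [CompleteSpace H]

/-- If `x` is orthogonal to the range of `R`, it is orthogonal to the closure of the range. -/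
lemma inner_eq_zero_of_forall {R : H →L[ℂ] H} {x : H} (hx : ∀ g, ⟪x, R g⟫_ℂ = 0) :
    ∀ u ∈ (LinearMap.range (R : H →ₗ[ℂ] H)).topologicalClosure, ⟪x, u⟫_ℂ = 0 := by
  intro u hu
  have hle : (LinearMap.range (R : H →ₗ[ℂ] H)).topologicalClosure ≤ LinearMap.ker ((innerSL ℂ x : H →L[ℂ] ℂ) : H →ₗ[ℂ] ℂ) := by
    apply Submodule.topologicalClosure_minimal
    · rintro y ⟨g, rfl⟩
      simpa using hx g
    · exact ContinuousLinearMap.isClosed_ker (innerSL ℂ x)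
  exact hle hu

lemma eq_of_inner_range {R : H →L[ℂ] H} {v w : H}
    (hv : v ∈ (LinearMap.range (R : H →ₗ[ℂ] H)).topologicalClosure)
    (hw : w ∈ (LinearMap.range (R : H →ₗ[ℂ] H)).topologicalClosure)
    (h : ∀ g, ⟪v, R g⟫_ℂ = ⟪w, R g⟫_ℂ) : v = w := by
  have h0 : ∀ g, ⟪v - w, R g⟫_ℂ = 0 := by
    intro g; rw [inner_sub_left, h g]; ring
  have := inner_eq_zero_of_forall h0 (v - w) (Submodule.sub_mem _ hv hw)
  rwa [inner_self_eq_zero, sub_eq_zero] at this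

/-- Riesz-type representation on the closure of the range of `R`. -/
lemma exists_rep (R : H →L[ℂ] H) (φ : H →ₗ[ℂ] ℂ) (c : ℝ) (hc : 0 ≤ c)
    (hφ : ∀ g, ‖φ g‖ ≤ c * ‖R g‖) :
    ∃ v, v ∈ (LinearMap.range (R : H →ₗ[ℂ] H)).topologicalClosure ∧ ‖v‖ ≤ c ∧
      ∀ g, ⟪v, R g⟫_ℂ = φ g := by
  have hwd : ∀ g g', R g = R g' → φ g = φ g' := by
    intro g g' hgg'
    have : ‖φ g - φ g'‖ ≤ c * ‖R (g - g')‖ := by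
      simpa [map_sub] using hφ (g - g')
    rw [map_sub, hgg', sub_self, norm_zero, mul_zero] at this
    have := le_antisymm this (norm_nonneg _)
    rwa [norm_eq_zero, sub_eq_zero] at this
  set p : Submodule ℂ H := LinearMap.range (R : H →ₗ[ℂ] H) with hp
  have hrep : ∀ y : p, R (Exists.choose y.2) = (y : H) := fun y => y.2.choose_spec
  set χ₀ : p →ₗ[ℂ] ℂ :=
    { toFun := fun y => φ (Exists.choose y.2)
      map_add' := by
        intro y z
        show φ (Exists.choose (y + z).2) = φ (Exists.choose y.2) + φ (Exists.choose z.2)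
        have : φ (Exists.choose (y + z).2) = φ (Exists.choose y.2 + Exists.choose z.2) := by
          apply hwd
          rw [map_add, hrep, hrep, hrep]; rfl
        rw [this, map_add]
      map_smul' := by
        intro a y
        show φ (Exists.choose (a • y).2) = (RingHom.id ℂ) a • φ (Exists.choose y.2)
        have : φ (Exists.choose (a • y).2) = φ (a • Exists.choose y.2) := by
          apply hwd
          rw [map_smul, hrep, hrep]; rfl
        rw [this, map_smul]; rfl } with hχ₀
  have hbound : ∀ y : p, ‖χ₀ y‖ ≤ c * ‖y‖ := by
    intro y
    have := hφ (Exists.choose y.2)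
    rwa [hrep] at this
  set χ : p →L[ℂ] ℂ := χ₀.mkContinuous c hbound with hχ
  obtain ⟨ψ, hψext, hψnorm⟩ := exists_extension_norm_eq p χ
  have hψn : ‖ψ‖ ≤ c := by
    rw [hψnorm]; exact χ₀.mkContinuous_norm_le hc hbound
  set v' : H := (InnerProductSpace.toDual ℂ H).symm ψ with hv'
  have hv'app : ∀ x : H, ⟪v', x⟫_ℂ = ψ x := fun x => InnerProductSpace.toDual_symm_apply
  have hv'norm : ‖v'‖ ≤ c := by
    rw [hv', LinearIsometryEquiv.norm_map]; exact hψn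
  set M := p.topologicalClosure with hM
  haveI : CompleteSpace M := (Submodule.isClosed_topologicalClosure p).completeSpace_coe
  set v : H := (M.orthogonalProjectionOnto v' : H) with hv
  have hvmem : v ∈ M := (M.orthogonalProjectionOnto v').2
  have hworth : v' - v ∈ Mᗮ := Submodule.sub_starProjection_mem_orthogonal v'
  refine ⟨v, hvmem, ?_, ?_⟩
  · have h0 : ⟪v, v' - v⟫_ℂ = 0 :=
      (Submodule.mem_orthogonal M (v' - v)).1 hworth v hvmem
    have : ‖v'‖ ^ 2 = ‖v‖ ^ 2 + ‖v' - v‖ ^ 2 := by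
      have := norm_add_sq (𝕜 := ℂ) v (v' - v)
      rw [show v + (v' - v) = v' from add_sub_cancel v v'] at this
      rw [this, h0]; simp
    nlinarith [norm_nonneg v, norm_nonneg v', hv'norm]
  · intro g
    have hmem : R g ∈ M := Submodule.le_topologicalClosure p ⟨g, rfl⟩
    have h0 : ⟪v' - v, R g⟫_ℂ = 0 := by
      rw [← inner_conj_symm]
      rw [(Submodule.mem_orthogonal M (v' - v)).1 hworth (R g) hmem]
      simp
    have : ⟪v, R g⟫_ℂ = ⟪v', R g⟫_ℂ := by
      rw [show v' = v + (v' - v) from (add_sub_cancel v v').symm]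
      rw [inner_add_left, h0, add_zero]
    rw [this, hv'app]
    have : ψ (R g) = χ ⟨R g, ⟨g, rfl⟩⟩ := hψext ⟨R g, ⟨g, rfl⟩⟩
    rw [this]
    exact hwd _ _ (hrep ⟨R g, ⟨g, rfl⟩⟩)

end Helpers

set_option maxHeartbeats 1000000 in
theorem statement1 {H : Type*} [NormedAddCommGroup H] [InnerProductSpace ℂ H] [CompleteSpace H]
    (R₁ R₂ A : H →L[ℂ] H) (hR₁ : R₁.IsPositive) (hR₂ : R₂.IsPositive) :
    List.TFAE
      [ (∃ B : H →L[ℂ] H, ‖B‖ ≤ 1 ∧ (∀ x : H, R₁ x = 0 → B x = 0) ∧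
          (∀ x : H, B x ∈ (LinearMap.range (R₂ : H →ₗ[ℂ] H)).topologicalClosure) ∧
          A = R₂.comp (B.comp R₁)),
        (∀ f g : H, 2 * ‖⟪A f, g⟫_ℂ‖ ≤
          (⟪(R₁.comp R₁) f, f⟫_ℂ).re + (⟪(R₂.comp R₂) g, g⟫_ℂ).re),
        (∀ f g : H, ‖⟪A f, g⟫_ℂ‖ ≤ ‖R₁ f‖ * ‖R₂ g‖) ] := by
  have hsym₁ : R₁.IsSymmetric := hR₁.1
  have hsym₂ : R₂.IsSymmetric := hR₂.1
  have hsym₁' : ∀ x y : H, ⟪R₁ x, y⟫_ℂ = ⟪x, R₁ y⟫_ℂ := fun x y => hsym₁ x y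
  have hsym₂' : ∀ x y : H, ⟪R₂ x, y⟫_ℂ = ⟪x, R₂ y⟫_ℂ := fun x y => hsym₂ x y
  have hre : ∀ (R : H →L[ℂ] H), R.IsSymmetric → ∀ f,
      (⟪(R.comp R) f, f⟫_ℂ).re = ‖R f‖ ^ 2 := by
    intro R hR f
    have h1 : ⟪(R.comp R) f, f⟫_ℂ = ⟪R f, R f⟫_ℂ := hR (R f) f
    rw [h1, inner_self_eq_norm_sq_to_K]
    simp [← Complex.ofReal_pow]
  tfae_have 1 → 3 := by
    rintro ⟨B, hB, -, -, rfl⟩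
    intro f g
    have h1 : ⟪(R₂.comp (B.comp R₁)) f, g⟫_ℂ = ⟪B (R₁ f), R₂ g⟫_ℂ := hsym₂ _ _
    rw [h1]
    calc ‖⟪B (R₁ f), R₂ g⟫_ℂ‖ ≤ ‖B (R₁ f)‖ * ‖R₂ g‖ := norm_inner_le_norm _ _
      _ ≤ ‖R₁ f‖ * ‖R₂ g‖ := by
          have h2 := B.le_opNorm (R₁ f)
          have h3 : ‖B (R₁ f)‖ ≤ ‖R₁ f‖ := by nlinarith [norm_nonneg (R₁ f)]
          exact mul_le_mul_of_nonneg_right h3 (norm_nonneg _)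
  tfae_have 3 → 2 := by
    intro h f g
    rw [hre R₁ hsym₁ f, hre R₂ hsym₂ g]
    nlinarith [h f g, sq_nonneg (‖R₁ f‖ - ‖R₂ g‖)]
  tfae_have 2 → 3 := by
    intro h f g
    set a := ‖R₁ f‖ with ha'
    set b := ‖R₂ g‖ with hb'
    set c := ‖⟪A f, g⟫_ℂ‖ with hc'
    have ha0 : 0 ≤ a := norm_nonneg _
    have hb0 : 0 ≤ b := norm_nonneg _
    have hc0 : 0 ≤ c := norm_nonneg _
    have h' : ∀ s t : ℝ, 0 ≤ s → 0 ≤ t →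
        2 * (s * t) * c ≤ s ^ 2 * a ^ 2 + t ^ 2 * b ^ 2 := by
      intro s t hs ht
      have key := h ((s : ℂ) • f) ((t : ℂ) • g)
      rw [hre R₁ hsym₁, hre R₂ hsym₂] at key
      have e1 : ⟪A ((s : ℂ) • f), (t : ℂ) • g⟫_ℂ =
          (starRingEnd ℂ) (s : ℂ) * ((t : ℂ) * ⟪A f, g⟫_ℂ) := by
        rw [map_smul, inner_smul_left, inner_smul_right]
      have e2 : ‖⟪A ((s : ℂ) • f), (t : ℂ) • g⟫_ℂ‖ = s * t * c := by
        rw [e1, norm_mul, norm_mul, RCLike.norm_conj]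
        simp only [Complex.norm_real, Real.norm_eq_abs,
          _root_.abs_of_nonneg hs, _root_.abs_of_nonneg ht]
        rw [← hc']
        ring
      have e3 : ‖R₁ ((s : ℂ) • f)‖ = s * a := by
        rw [map_smul, norm_smul]
        simp only [Complex.norm_real, Real.norm_eq_abs, _root_.abs_of_nonneg hs, ← ha']
      have e4 : ‖R₂ ((t : ℂ) • g)‖ = t * b := by
        rw [map_smul, norm_smul]
        simp only [Complex.norm_real, Real.norm_eq_abs, _root_.abs_of_nonneg ht, ← hb']
      rw [e2, e3, e4] at key
      nlinarith [key]
    by_cases hac : a = 0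
    · by_contra hcon
      push_neg at hcon
      have hcpos : 0 < c := by nlinarith [hcon]
      have hs := h' ((b ^ 2 + 1) / (2 * c)) 1 (by positivity) zero_le_one
      rw [hac] at hs
      have hkey : 2 * ((b ^ 2 + 1) / (2 * c) * 1) * c = b ^ 2 + 1 := by
        field_simp
      nlinarith [hs]
    · by_cases hbc : b = 0
      · by_contra hcon
        push_neg at hcon
        have hcpos : 0 < c := by nlinarith [hcon]
        have hs := h' 1 ((a ^ 2 + 1) / (2 * c)) zero_le_one (by positivity)
        rw [hbc] at hs
        have hkey : 2 * (1 * ((a ^ 2 + 1) / (2 * c))) * c = a ^ 2 + 1 := by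
          field_simp
        nlinarith [hs]
      · have hapos : 0 < a := lt_of_le_of_ne ha0 (Ne.symm hac)
        have hbpos : 0 < b := lt_of_le_of_ne hb0 (Ne.symm hbc)
        have hs := h' b a hb0 ha0
        nlinarith [hs, mul_pos hapos hbpos]
  tfae_have 3 → 1 := by
    intro h3
    -- construct T
    have hT := fun f => exists_rep R₂ ((innerSL ℂ (A f)).toLinearMap) ‖R₁ f‖ (norm_nonneg _)
      (fun g => by simpa using h3 f g)
    choose T hTmem hTnorm hTinner using hT
    have hTinner' : ∀ f g, ⟪T f, R₂ g⟫_ℂ = ⟪A f, g⟫_ℂ := by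
      intro f g; simpa using hTinner f g
    have hTadd : ∀ f f', T (f + f') = T f + T f' := by
      intro f f'
      refine eq_of_inner_range (hTmem _) (Submodule.add_mem _ (hTmem f) (hTmem f')) ?_
      intro g
      simp only [hTinner', inner_add_left, map_add]
    have hTsmul : ∀ (c : ℂ) f, T (c • f) = c • T f := by
      intro c f
      refine eq_of_inner_range (hTmem _) (Submodule.smul_mem _ c (hTmem f)) ?_
      intro g
      simp only [hTinner', inner_smul_left, map_smul]
    set Tl : H →ₗ[ℂ] H :=
      { toFun := T, map_add' := hTadd, map_smul' := hTsmul } with hTldef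
    set TL : H →L[ℂ] H :=
      Tl.mkContinuous ‖R₁‖ (fun f => (hTnorm f).trans (R₁.le_opNorm f)) with hTLdef
    have hTLapp : ∀ f, TL f = T f := fun f => rfl
    -- construct C
    have hC := fun y => exists_rep R₁ (((innerSL ℂ y).comp TL).toLinearMap) ‖y‖ (norm_nonneg _)
      (fun f => by
        have h1 : ‖⟪y, TL f⟫_ℂ‖ ≤ ‖y‖ * ‖TL f‖ := norm_inner_le_norm _ _
        have h2 : ‖TL f‖ ≤ ‖R₁ f‖ := by rw [hTLapp]; exact hTnorm f
        have := h1.trans (mul_le_mul_of_nonneg_left h2 (norm_nonneg y))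
        simpa using this)
    choose C hCmem hCnorm hCinner using hC
    have hCinner' : ∀ y f, ⟪C y, R₁ f⟫_ℂ = ⟪y, T f⟫_ℂ := by
      intro y f
      have := hCinner y f
      simpa [hTLapp] using this
    have hCadd : ∀ y y', C (y + y') = C y + C y' := by
      intro y y'
      refine eq_of_inner_range (hCmem _) (Submodule.add_mem _ (hCmem y) (hCmem y')) ?_
      intro g
      simp only [hCinner', inner_add_left]
    have hCsmul : ∀ (c : ℂ) y, C (c • y) = c • C y := by
      intro c y
      refine eq_of_inner_range (hCmem _) (Submodule.smul_mem _ c (hCmem y)) ?_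
      intro g
      simp only [hCinner', inner_smul_left]
    set Cl : H →ₗ[ℂ] H :=
      { toFun := C, map_add' := hCadd, map_smul' := hCsmul } with hCldef
    set CL : H →L[ℂ] H := Cl.mkContinuous 1 (fun y => by rw [one_mul]; exact hCnorm y) with hCLdef
    have hCLapp : ∀ y, CL y = C y := fun y => rfl
    set B : H →L[ℂ] H := ContinuousLinearMap.adjoint CL with hBdef
    have hBinner : ∀ x y, ⟪B x, y⟫_ℂ = ⟪x, C y⟫_ℂ := by
      intro x y
      rw [hBdef, ContinuousLinearMap.adjoint_inner_left, hCLapp]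
    refine ⟨B, ?_, ?_, ?_, ?_⟩
    · have h1 : ‖B‖ = ‖CL‖ := LinearIsometryEquiv.norm_map ContinuousLinearMap.adjoint CL
      rw [h1]
      exact Cl.mkContinuous_norm_le zero_le_one _
    · intro x hx
      have hxorth : ∀ u ∈ (LinearMap.range (R₁ : H →ₗ[ℂ] H)).topologicalClosure, ⟪x, u⟫_ℂ = 0 := by
        apply inner_eq_zero_of_forall
        intro g
        rw [← hsym₁' x g, hx, inner_zero_left]
      refine ext_inner_right ℂ fun y => ?_
      rw [hBinner, inner_zero_left]
      exact hxorth (C y) (hCmem y)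
    · intro x
      set K₂ := (LinearMap.range (R₂ : H →ₗ[ℂ] H)).topologicalClosure with hK₂
      haveI : CompleteSpace K₂ :=
        (Submodule.isClosed_topologicalClosure _).completeSpace_coe
      have horth : K₂ᗮᗮ = K₂ := Submodule.orthogonal_orthogonal K₂
      rw [← horth, Submodule.mem_orthogonal]
      intro w hw
      have hCw : C w = 0 := by
        refine eq_of_inner_range (hCmem w) (Submodule.zero_mem _) ?_
        intro g
        rw [hCinner', inner_zero_left]
        have := (Submodule.mem_orthogonal K₂ w).1 hw (T g) (hTmem g)
        rw [← inner_conj_symm, this, map_zero]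
      rw [← inner_conj_symm, hBinner, hCw, inner_zero_right, map_zero]
    · ext f
      refine ext_inner_right ℂ fun y => ?_
      show ⟪A f, y⟫_ℂ = ⟪R₂ ((B.comp R₁) f) , y⟫_ℂ
      have e0 : (B.comp R₁) f = B (R₁ f) := rfl
      rw [e0, hsym₂' (B (R₁ f)) y, hBinner]
      have h1 : ⟪R₁ f, C (R₂ y)⟫_ℂ = (starRingEnd ℂ) ⟪C (R₂ y), R₁ f⟫_ℂ :=
        (inner_conj_symm _ _).symm
      rw [h1, hCinner', ← hTinner' f y]
      exact (inner_conj_symm _ _).symm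
  tfae_finish


end
end

section
/- Let H be a complex Hilbert space, R₁, R₂ ∈ B(H) selfadjoint and nonnegative with ker R₁ = ker R₂, let 𝓗 := (ker R₁)^⊥, A ∈ B(H), and φ ∈ (0, π/2]. Then A admits a representation A = R₂·K·R₁ with K ∈ B(𝓗) of class C_𝓗(φ) (K being composed with the orthogonal projection onto 𝓗 and the inclusion 𝓗 ↪ H) if and only if for both signs ε = ±1 and all f, g ∈ H one has 2·Re⟨(sin φ·A + ε·i·cos φ·R₂R₁)f, g⟩ ≤ ⟨R₁²f, f⟩ + ⟨R₂²g, g⟩. -/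
open ContinuousLinearMap Complex
open scoped InnerProductSpace

noncomputable section

section AuxiliaryLemmas

set_option linter.unusedSectionVars false

variable {H : Type*} [NormedAddCommGroup H] [InnerProductSpace ℂ H] [CompleteSpace H]

lemma aux_two_re_le {H : Type*} [NormedAddCommGroup H] [InnerProductSpace ℂ H]
    (u v : H) : 2 * (⟪u, v⟫_ℂ).re ≤ ‖u‖^2 + ‖v‖^2 := by
  have h1 : (⟪u, v⟫_ℂ).re ≤ ‖⟪u, v⟫_ℂ‖ := Complex.re_le_norm _
  have h2 : ‖⟪u, v⟫_ℂ‖ ≤ ‖u‖ * ‖v‖ := norm_inner_le_norm u v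
  nlinarith [norm_nonneg u, norm_nonneg v, sq_nonneg (‖u‖ - ‖v‖)]

lemma aux_abs_le {H : Type*} [NormedAddCommGroup H] [InnerProductSpace ℂ H]
    (B R S : H →L[ℂ] H)
    (h : ∀ f g : H, 2 * (⟪B f, g⟫_ℂ).re ≤ ‖R f‖^2 + ‖S g‖^2) (f g : H) :
    ‖⟪B f, g⟫_ℂ‖ ≤ ‖R f‖ * ‖S g‖ := by
  set a := ‖R f‖ with ha
  set b := ‖S g‖ with hb
  have ha0 : 0 ≤ a := norm_nonneg _
  have hb0 : 0 ≤ b := norm_nonneg _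
  set z := ⟪B f, g⟫_ℂ with hzdef
  have key : ∀ t : ℝ, 0 < t → 2 * ‖z‖ ≤ t^2 * a^2 + (t⁻¹)^2 * b^2 := by
    intro t ht
    by_cases hz : z = 0
    · rw [hz]; simp; positivity
    have hzn : (‖z‖ : ℝ) ≠ 0 := norm_ne_zero_iff.mpr hz
    set c : ℂ := (starRingEnd ℂ) z / (‖z‖ : ℂ) with hc
    have habs : (starRingEnd ℂ) z * z = ((‖z‖^2 : ℝ) : ℂ) := by
      rw [mul_comm, Complex.mul_conj, Complex.normSq_eq_norm_sq]
    have hcz : c * z = (‖z‖ : ℂ) := by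
      rw [hc, div_mul_eq_mul_div, habs]
      norm_cast
      rw [sq]
      field_simp
    have hnc : ‖c‖ = 1 := by
      rw [hc, norm_div, RCLike.norm_conj, Complex.norm_real, Real.norm_eq_abs,
        _root_.abs_of_nonneg (norm_nonneg z), div_self hzn]
    have hbig := h ((t : ℂ) • f) ((c * (t : ℂ)⁻¹) • g)
    have htne : (t : ℂ) ≠ 0 := by exact_mod_cast ne_of_gt ht
    have hinner : ⟪B ((t : ℂ) • f), (c * (t : ℂ)⁻¹) • g⟫_ℂ = (‖z‖ : ℂ) := by
      rw [map_smul, inner_smul_left, inner_smul_right, ← hzdef]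
      rw [Complex.conj_ofReal]
      rw [← hcz]
      field_simp
    rw [hinner] at hbig
    have hre : ((‖z‖ : ℂ)).re = ‖z‖ := by simp
    rw [hre] at hbig
    have hn1 : ‖R ((t : ℂ) • f)‖ = t * a := by
      rw [map_smul, norm_smul, Complex.norm_real, Real.norm_eq_abs, abs_of_pos ht, ha]
    have hn2 : ‖S ((c * (t : ℂ)⁻¹) • g)‖ = t⁻¹ * b := by
      rw [map_smul, norm_smul, norm_mul, hnc, norm_inv, Complex.norm_real,
        Real.norm_eq_abs, abs_of_pos ht, one_mul, hb]
    rw [hn1, hn2] at hbig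
    calc 2 * ‖z‖ ≤ (t * a)^2 + (t⁻¹ * b)^2 := hbig
      _ = t^2 * a^2 + (t⁻¹)^2 * b^2 := by ring
  have h2 : ∀ δ : ℝ, 0 < δ → 2 * ‖z‖ ≤ 2 * (a * b) + δ * (a + b) := by
    intro δ hδ
    have hbd : 0 < (b + δ) / (a + δ) := div_pos (by linarith) (by linarith)
    have ht : 0 < Real.sqrt ((b + δ) / (a + δ)) := Real.sqrt_pos.mpr hbd
    have h3 := key _ ht
    rw [Real.sq_sqrt hbd.le, inv_pow, Real.sq_sqrt hbd.le, inv_div] at h3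
    have hA : (b + δ) / (a + δ) * a^2 ≤ a * (b + δ) := by
      rw [div_mul_eq_mul_div, div_le_iff₀ (by linarith)]
      nlinarith [mul_nonneg (mul_nonneg (by linarith : (0:ℝ) ≤ b + δ) ha0) hδ.le]
    have hB : (a + δ) / (b + δ) * b^2 ≤ b * (a + δ) := by
      rw [div_mul_eq_mul_div, div_le_iff₀ (by linarith)]
      nlinarith [mul_nonneg (mul_nonneg (by linarith : (0:ℝ) ≤ a + δ) hb0) hδ.le]
    nlinarith
  by_contra hcon
  push_neg at hcon
  set η := (‖z‖ - a * b) / (a + b + 1) with hη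
  have hηpos : 0 < η := by
    apply div_pos (by linarith) (by linarith)
  have := h2 η hηpos
  have hle : η * (a + b) ≤ ‖z‖ - a * b := by
    rw [hη, div_mul_eq_mul_div, div_le_iff₀ (by linarith)]
    nlinarith
  linarith

lemma aux_range_subset_orth (R : H →L[ℂ] H)
    (hsym : ∀ x y : H, ⟪R x, y⟫_ℂ = ⟪x, R y⟫_ℂ) (y : H) :
    R y ∈ (LinearMap.ker (R : H →ₗ[ℂ] H))ᗮ := by
  rw [Submodule.mem_orthogonal]
  intro k hk
  rw [LinearMap.mem_ker, ContinuousLinearMap.coe_coe] at hk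
  rw [← hsym k y, hk, inner_zero_left]

lemma aux_unique (R : H →L[ℂ] H) {u u' : H}
    (hu : u ∈ (LinearMap.ker (R : H →ₗ[ℂ] H))ᗮ) (hu' : u' ∈ (LinearMap.ker (R : H →ₗ[ℂ] H))ᗮ)
    (h : R u = R u') : u = u' := by
  have hmem : u - u' ∈ LinearMap.ker (R : H →ₗ[ℂ] H) := by
    rw [LinearMap.mem_ker, ContinuousLinearMap.coe_coe, map_sub, h, sub_self]
  have horth : u - u' ∈ (LinearMap.ker (R : H →ₗ[ℂ] H))ᗮ := Submodule.sub_mem _ hu hu'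
  have := Submodule.inner_right_of_mem_orthogonal hmem horth
  rw [inner_self_eq_zero] at this
  exact sub_eq_zero.mp this

lemma aux_exists_preimage (R : H →L[ℂ] H)
    (hsym : ∀ x y : H, ⟪R x, y⟫_ℂ = ⟪x, R y⟫_ℂ) (v : H) (c : ℝ) (hc : 0 ≤ c)
    (hb : ∀ g : H, ‖⟪v, g⟫_ℂ‖ ≤ c * ‖R g‖) :
    ∃ u : H, u ∈ (LinearMap.ker (R : H →ₗ[ℂ] H))ᗮ ∧ R u = v ∧ ‖u‖ ≤ c := by
  classical
  set p : Submodule ℂ H := LinearMap.range (R : H →ₗ[ℂ] H) with hp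
  have hex : ∀ x : p, ∃ g : H, R g = (x : H) := fun x => x.2
  have wd : ∀ g g' : H, R g = R g' → ⟪v, g⟫_ℂ = ⟪v, g'⟫_ℂ := by
    intro g g' hgg
    have h0 : ‖⟪v, g - g'⟫_ℂ‖ ≤ c * ‖R (g - g')‖ := hb _
    rw [map_sub, hgg, sub_self, norm_zero, mul_zero, norm_le_zero_iff] at h0
    rw [inner_sub_right, sub_eq_zero] at h0
    exact h0
  set lam : p →ₗ[ℂ] ℂ :=
    { toFun := fun x => ⟪v, (hex x).choose⟫_ℂ
      map_add' := by
        intro x y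
        have h1 : R ((hex x).choose + (hex y).choose) = ((x + y : p) : H) := by
          rw [map_add, (hex x).choose_spec, (hex y).choose_spec]; rfl
        rw [← inner_add_right]
        exact wd _ _ ((hex (x + y)).choose_spec.trans h1.symm)
      map_smul' := by
        intro m x
        have h1 : R (m • (hex x).choose) = ((m • x : p) : H) := by
          rw [map_smul, (hex x).choose_spec]; rfl
        simp only [RingHom.id_apply, smul_eq_mul]
        rw [← inner_smul_right]
        exact wd _ _ ((hex (m • x)).choose_spec.trans h1.symm) } with hlam
  have hlb : ∀ x : p, ‖lam x‖ ≤ c * ‖x‖ := by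
    intro x
    have := hb (hex x).choose
    rwa [(hex x).choose_spec] at this
  set lamL : p →L[ℂ] ℂ := LinearMap.mkContinuous lam c hlb with hlamL
  obtain ⟨Λ, hext, hnorm⟩ := exists_extension_norm_eq p lamL
  set u₀ : H := (InnerProductSpace.toDual ℂ H).symm Λ with hu₀
  have hu₀app : ∀ x : H, ⟪u₀, x⟫_ℂ = Λ x := fun x =>
    InnerProductSpace.toDual_symm_apply
  set V : Submodule ℂ H := (LinearMap.ker (R : H →ₗ[ℂ] H))ᗮ with hV
  set u : H := (Submodule.orthogonalProjectionOnto V u₀ : H) with hu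
  refine ⟨u, (Submodule.orthogonalProjectionOnto V u₀).2, ?_, ?_⟩
  · apply ext_inner_right ℂ
    intro y
    rw [hsym u y]
    have hRy : R y ∈ V := aux_range_subset_orth R hsym y
    have hdiff : u₀ - u ∈ Vᗮ := Submodule.sub_starProjection_mem_orthogonal (K := V) u₀
    have h1 : ⟪u₀ - u, R y⟫_ℂ = 0 :=
      Submodule.inner_left_of_mem_orthogonal hRy hdiff
    rw [inner_sub_left, sub_eq_zero] at h1
    have h2 : ⟪u, R y⟫_ℂ = Λ (R y) := by rw [← h1, hu₀app]
    have hmem : R y ∈ p := ⟨y, rfl⟩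
    have h3 : Λ (R y) = lamL (⟨R y, hmem⟩ : p) := hext ⟨R y, hmem⟩
    have h4 : lamL (⟨R y, hmem⟩ : p) = ⟪v, (hex ⟨R y, hmem⟩).choose⟫_ℂ := rfl
    rw [h2, h3, h4]
    exact wd _ _ (hex (⟨R y, hmem⟩ : p)).choose_spec
  · have h5 : ‖u‖ ≤ ‖u₀‖ := by
      have := Submodule.orthogonalProjectionOnto_norm_le V
      calc ‖u‖ ≤ ‖Submodule.orthogonalProjectionOnto V‖ * ‖u₀‖ := (Submodule.orthogonalProjectionOnto V).le_opNorm u₀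
        _ ≤ 1 * ‖u₀‖ := by
            apply mul_le_mul_of_nonneg_right this (norm_nonneg _)
        _ = ‖u₀‖ := one_mul _
    have h6 : ‖u₀‖ = ‖Λ‖ := (InnerProductSpace.toDual ℂ H).symm.norm_map Λ
    have h7 : ‖lamL‖ ≤ c := LinearMap.mkContinuous_norm_le lam hc hlb
    calc ‖u‖ ≤ ‖u₀‖ := h5
      _ = ‖Λ‖ := h6
      _ = ‖lamL‖ := hnorm
      _ ≤ c := h7

lemma aux_exists_lift (R₁ R₂ B : H →L[ℂ] H)
    (hsym : ∀ x y : H, ⟪R₂ x, y⟫_ℂ = ⟪x, R₂ y⟫_ℂ)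
    (hb : ∀ f g : H, ‖⟪B f, g⟫_ℂ‖ ≤ ‖R₁ f‖ * ‖R₂ g‖) :
    ∃ T : H →L[ℂ] H, ∀ f : H,
      T f ∈ (LinearMap.ker (R₂ : H →ₗ[ℂ] H))ᗮ ∧ R₂ (T f) = B f ∧ ‖T f‖ ≤ ‖R₁ f‖ := by
  classical
  have hex : ∀ f : H, ∃ u : H, u ∈ (LinearMap.ker (R₂ : H →ₗ[ℂ] H))ᗮ ∧ R₂ u = B f ∧ ‖u‖ ≤ ‖R₁ f‖ :=
    fun f => aux_exists_preimage R₂ hsym (B f) (‖R₁ f‖) (norm_nonneg _) (hb f)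
  set t : H → H := fun f => (hex f).choose with ht
  have htmem : ∀ f, t f ∈ (LinearMap.ker (R₂ : H →ₗ[ℂ] H))ᗮ := fun f => (hex f).choose_spec.1
  have htR : ∀ f, R₂ (t f) = B f := fun f => (hex f).choose_spec.2.1
  have htn : ∀ f, ‖t f‖ ≤ ‖R₁ f‖ := fun f => (hex f).choose_spec.2.2
  set tl : H →ₗ[ℂ] H :=
    { toFun := t
      map_add' := by
        intro x y
        refine aux_unique R₂ (htmem (x + y)) (Submodule.add_mem _ (htmem x) (htmem y)) ?_
        rw [htR, map_add, map_add, htR, htR]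
      map_smul' := by
        intro m x
        simp only [RingHom.id_apply]
        refine aux_unique R₂ (htmem (m • x)) (Submodule.smul_mem _ m (htmem x)) ?_
        rw [htR, map_smul, map_smul, htR] } with htl
  have hbd : ∀ f : H, ‖tl f‖ ≤ ‖R₁‖ * ‖f‖ := fun f => (htn f).trans (R₁.le_opNorm f)
  refine ⟨LinearMap.mkContinuous tl ‖R₁‖ hbd, fun f => ?_⟩
  exact ⟨htmem f, htR f, htn f⟩

end AuxiliaryLemmas

set_option maxHeartbeats 1600000 in
theorem statement2 {H : Type*} [NormedAddCommGroup H] [InnerProductSpace ℂ H] [CompleteSpace H]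
    (R₁ R₂ A : H →L[ℂ] H) (hR₁ : R₁.IsPositive) (hR₂ : R₂.IsPositive)
    (hker : LinearMap.ker (R₁ : H →ₗ[ℂ] H) = LinearMap.ker (R₂ : H →ₗ[ℂ] H))
    (φ : ℝ) (hφ₁ : 0 < φ) (hφ₂ : φ ≤ Real.pi / 2) :
    (∃ K : H →L[ℂ] H,
        (∀ x : H, R₁ x = 0 → K x = 0) ∧
        (∀ x : H, K x ∈ (LinearMap.ker (R₁ : H →ₗ[ℂ] H))ᗮ) ∧
        (∀ f ∈ (LinearMap.ker (R₁ : H →ₗ[ℂ] H))ᗮ,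
          ‖(Real.sin φ : ℂ) • K f + (Complex.I * (Real.cos φ : ℂ)) • f‖ ≤ ‖f‖ ∧
          ‖(Real.sin φ : ℂ) • K f - (Complex.I * (Real.cos φ : ℂ)) • f‖ ≤ ‖f‖) ∧
        A = R₂.comp (K.comp R₁)) ↔
      (∀ ε : ℝ, ε = 1 ∨ ε = -1 → ∀ f g : H,
        2 * (⟪((Real.sin φ : ℂ) • A +
              ((ε : ℂ) * Complex.I * (Real.cos φ : ℂ)) • (R₂.comp R₁)) f, g⟫_ℂ).re ≤
          (⟪(R₁.comp R₁) f, f⟫_ℂ).re + (⟪(R₂.comp R₂) g, g⟫_ℂ).re) := by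
  have hS : 0 < Real.sin φ :=
    Real.sin_pos_of_pos_of_lt_pi hφ₁ (lt_of_le_of_lt hφ₂ (by linarith [Real.pi_pos]))
  have hsym₁ : ∀ x y : H, ⟪R₁ x, y⟫_ℂ = ⟪x, R₁ y⟫_ℂ := fun x y =>
    (isSelfAdjoint_iff_isSymmetric.mp hR₁.isSelfAdjoint) x y
  have hsym₂ : ∀ x y : H, ⟪R₂ x, y⟫_ℂ = ⟪x, R₂ y⟫_ℂ := fun x y =>
    (isSelfAdjoint_iff_isSymmetric.mp hR₂.isSelfAdjoint) x y
  have hRR₁ : ∀ f : H, (⟪(R₁.comp R₁) f, f⟫_ℂ).re = ‖R₁ f‖^2 := by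
    intro f
    rw [ContinuousLinearMap.comp_apply, hsym₁ (R₁ f) f]
    exact inner_self_eq_norm_sq (𝕜 := ℂ) (R₁ f)
  have hRR₂ : ∀ g : H, (⟪(R₂.comp R₂) g, g⟫_ℂ).re = ‖R₂ g‖^2 := by
    intro g
    rw [ContinuousLinearMap.comp_apply, hsym₂ (R₂ g) g]
    exact inner_self_eq_norm_sq (𝕜 := ℂ) (R₂ g)
  have hone : (((1:ℝ)):ℂ) * Complex.I * (Real.cos φ : ℂ) = Complex.I * (Real.cos φ : ℂ) := by
    push_cast; ring
  have hmone : (((-1:ℝ)):ℂ) * Complex.I * (Real.cos φ : ℂ) = -(Complex.I * (Real.cos φ : ℂ)) := by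
    push_cast; ring
  constructor
  · rintro ⟨K, hK0, hKmem, hKnorm, hKA⟩ ε hε f g
    rw [hRR₁ f, hRR₂ g]
    have hx : R₁ f ∈ (LinearMap.ker (R₁ : H →ₗ[ℂ] H))ᗮ := aux_range_subset_orth R₁ hsym₁ f
    set u : H := (Real.sin φ : ℂ) • K (R₁ f)
      + ((ε : ℂ) * Complex.I * (Real.cos φ : ℂ)) • (R₁ f) with hu
    have hop : ((Real.sin φ : ℂ) • A
        + ((ε : ℂ) * Complex.I * (Real.cos φ : ℂ)) • (R₂.comp R₁)) f = R₂ u := by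
      rw [hKA, hu]
      simp only [ContinuousLinearMap.add_apply, ContinuousLinearMap.smul_apply,
        ContinuousLinearMap.comp_apply, map_add, map_smul]
    have hun : ‖u‖ ≤ ‖R₁ f‖ := by
      rcases hε with h1 | h1
      · rw [hu, h1, hone]
        exact (hKnorm (R₁ f) hx).1
      · rw [hu, h1, hmone, neg_smul, ← sub_eq_add_neg]
        exact (hKnorm (R₁ f) hx).2
    rw [hop, hsym₂ u g]
    calc 2 * (⟪u, R₂ g⟫_ℂ).re ≤ ‖u‖^2 + ‖R₂ g‖^2 := aux_two_re_le u (R₂ g)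
      _ ≤ ‖R₁ f‖^2 + ‖R₂ g‖^2 := by nlinarith [norm_nonneg u, norm_nonneg (R₁ f)]
  · intro hineq
    classical
    set Bp : H →L[ℂ] H :=
      (Real.sin φ : ℂ) • A + (Complex.I * (Real.cos φ : ℂ)) • (R₂.comp R₁) with hBp
    set Bm : H →L[ℂ] H :=
      (Real.sin φ : ℂ) • A - (Complex.I * (Real.cos φ : ℂ)) • (R₂.comp R₁) with hBm
    have hop1 : ((Real.sin φ : ℂ) • A
        + (((1:ℝ) : ℂ) * Complex.I * (Real.cos φ : ℂ)) • (R₂.comp R₁)) = Bp := by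
      rw [hBp, hone]
    have hopm : ((Real.sin φ : ℂ) • A
        + (((-1:ℝ) : ℂ) * Complex.I * (Real.cos φ : ℂ)) • (R₂.comp R₁)) = Bm := by
      rw [hBm, hmone, neg_smul, ← sub_eq_add_neg]
    have habsp : ∀ f g : H, ‖⟪Bp f, g⟫_ℂ‖ ≤ ‖R₁ f‖ * ‖R₂ g‖ := by
      refine aux_abs_le Bp R₁ R₂ (fun f g => ?_)
      have h0 := hineq 1 (Or.inl rfl) f g
      rwa [hRR₁ f, hRR₂ g, hop1] at h0
    have habsm : ∀ f g : H, ‖⟪Bm f, g⟫_ℂ‖ ≤ ‖R₁ f‖ * ‖R₂ g‖ := by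
      refine aux_abs_le Bm R₁ R₂ (fun f g => ?_)
      have h0 := hineq (-1) (Or.inr rfl) f g
      rwa [hRR₁ f, hRR₂ g, hopm] at h0
    obtain ⟨Tp, hTp⟩ := aux_exists_lift R₁ R₂ Bp hsym₂ habsp
    obtain ⟨Tm, hTm⟩ := aux_exists_lift R₁ R₂ Bm hsym₂ habsm
    have hrange₁ : ∀ f : H, R₁ f ∈ (LinearMap.ker (R₂ : H →ₗ[ℂ] H))ᗮ := by
      intro f; rw [← hker]; exact aux_range_subset_orth R₁ hsym₁ f
    have hdiff : ∀ f : H, Tp f - Tm f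
        = ((2:ℂ) * Complex.I * (Real.cos φ : ℂ)) • R₁ f := by
      intro f
      refine aux_unique R₂ (Submodule.sub_mem _ (hTp f).1 (hTm f).1)
        (Submodule.smul_mem _ _ (hrange₁ f)) ?_
      rw [map_sub, (hTp f).2.1, (hTm f).2.1, map_smul, hBp, hBm]
      simp only [ContinuousLinearMap.add_apply, ContinuousLinearMap.sub_apply,
        ContinuousLinearMap.smul_apply, ContinuousLinearMap.comp_apply]
      module
    have hSne : ((Real.sin φ : ℝ) : ℂ) ≠ 0 := by
      exact_mod_cast hS.ne'
    have hSneC : Complex.sin (φ : ℂ) ≠ 0 := by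
      have h := hSne; rwa [Complex.ofReal_sin] at h
    set σ : ℂ := ((2:ℂ) * ((Real.sin φ : ℝ) : ℂ))⁻¹ with hσdef
    set K₀ : H →L[ℂ] H := σ • (Tp + Tm) with hK₀
    have hK₀app : ∀ f : H, K₀ f = σ • (Tp f + Tm f) := by
      intro f
      rw [hK₀]
      simp only [ContinuousLinearMap.smul_apply, ContinuousLinearMap.add_apply]
    have hplus : ∀ f : H, (Real.sin φ : ℂ) • K₀ f
        + (Complex.I * (Real.cos φ : ℂ)) • R₁ f = Tp f := by
      intro f
      have hm : Tm f = Tp f - ((2:ℂ) * Complex.I * (Real.cos φ : ℂ)) • R₁ f := by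
        rw [← hdiff f]; abel
      rw [hK₀app f, hm]
      match_scalars <;> (rw [hσdef]; field_simp [hSneC]) <;> push_cast <;> ring
    have hminus : ∀ f : H, (Real.sin φ : ℂ) • K₀ f
        - (Complex.I * (Real.cos φ : ℂ)) • R₁ f = Tm f := by
      intro f
      have := hplus f
      have h2 := hdiff f
      have : Tm f = ((Real.sin φ : ℂ) • K₀ f + (Complex.I * (Real.cos φ : ℂ)) • R₁ f)
          - ((2:ℂ) * Complex.I * (Real.cos φ : ℂ)) • R₁ f := by
        rw [this, ← h2]; abel
      rw [this]
      match_scalars <;> ring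
    have hR₂K₀ : ∀ f : H, R₂ (K₀ f) = A f := by
      intro f
      rw [hK₀app f, map_smul, map_add, (hTp f).2.1, (hTm f).2.1, hBp, hBm]
      simp only [ContinuousLinearMap.add_apply, ContinuousLinearMap.sub_apply,
        ContinuousLinearMap.smul_apply, ContinuousLinearMap.comp_apply]
      match_scalars <;> (rw [hσdef]; field_simp [hSneC]) <;> push_cast <;> ring
    have hBpker : ∀ f : H, R₁ f = 0 → Bp f = 0 := by
      intro f hf
      have h0 := habsp f (Bp f)
      rw [hf, norm_zero, zero_mul, norm_le_zero_iff, inner_self_eq_zero] at h0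
      exact h0
    have hBmker : ∀ f : H, R₁ f = 0 → Bm f = 0 := by
      intro f hf
      have h0 := habsm f (Bm f)
      rw [hf, norm_zero, zero_mul, norm_le_zero_iff, inner_self_eq_zero] at h0
      exact h0
    have hTpker : ∀ f : H, R₁ f = 0 → Tp f = 0 := by
      intro f hf
      refine aux_unique R₂ (hTp f).1 (Submodule.zero_mem _) ?_
      rw [(hTp f).2.1, hBpker f hf, map_zero]
    have hTmker : ∀ f : H, R₁ f = 0 → Tm f = 0 := by
      intro f hf
      refine aux_unique R₂ (hTm f).1 (Submodule.zero_mem _) ?_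
      rw [(hTm f).2.1, hBmker f hf, map_zero]
    have hK₀ker : ∀ f : H, R₁ f = 0 → K₀ f = 0 := by
      intro f hf
      rw [hK₀app f, hTpker f hf, hTmker f hf, add_zero, smul_zero]
    have hK₀mem : ∀ f : H, K₀ f ∈ (LinearMap.ker (R₁ : H →ₗ[ℂ] H))ᗮ := by
      intro f
      rw [hker, hK₀app f]
      exact Submodule.smul_mem _ _ (Submodule.add_mem _ (hTp f).1 (hTm f).1)
    have hσn : ‖σ‖ = (2 * Real.sin φ)⁻¹ := by
      rw [hσdef, norm_inv, norm_mul, Complex.norm_real, Real.norm_eq_abs,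
        _root_.abs_of_pos hS]
      norm_num
    have hK₀n : ∀ f : H, ‖K₀ f‖ ≤ (Real.sin φ)⁻¹ * ‖R₁ f‖ := by
      intro f
      rw [hK₀app f]
      calc ‖σ • (Tp f + Tm f)‖ = ‖σ‖ * ‖Tp f + Tm f‖ := norm_smul _ _
        _ ≤ (2 * Real.sin φ)⁻¹ * (‖Tp f‖ + ‖Tm f‖) := by
            rw [hσn]
            apply mul_le_mul_of_nonneg_left (norm_add_le _ _)
            positivity
        _ ≤ (2 * Real.sin φ)⁻¹ * (‖R₁ f‖ + ‖R₁ f‖) := by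
            apply mul_le_mul_of_nonneg_left (by linarith [(hTp f).2.2, (hTm f).2.2])
            positivity
        _ = (Real.sin φ)⁻¹ * ‖R₁ f‖ := by
            field_simp
            ring
    -- the dense submodule
    set D : Submodule ℂ H := LinearMap.range (R₁ : H →ₗ[ℂ] H) ⊔ LinearMap.ker (R₁ : H →ₗ[ℂ] H) with hD
    have hRR0 : ∀ s : H, R₁ (R₁ s) = 0 → R₁ s = 0 := by
      intro s hs
      have h1 : ⟪R₁ s, R₁ s⟫_ℂ = 0 := by
        rw [hsym₁ s (R₁ s), hs, inner_zero_right]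
      rwa [inner_self_eq_zero] at h1
    have wdK : ∀ u a b : H, R₁ (u - R₁ a) = 0 → R₁ (u - R₁ b) = 0 → K₀ a = K₀ b := by
      intro u a b hua hub
      have h1 : R₁ (R₁ (b - a)) = 0 := by
        have he : R₁ (b - a) = (u - R₁ a) - (u - R₁ b) := by
          rw [map_sub]; abel
        rw [he, map_sub, hua, hub, sub_zero]
      have h2 : R₁ (b - a) = 0 := hRR0 _ h1
      have h3 : K₀ (b - a) = 0 := hK₀ker _ h2
      rw [map_sub, sub_eq_zero] at h3
      exact h3.symm
    have hsel : ∀ x : D, ∃ a : H, R₁ ((x : H) - R₁ a) = 0 := by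
      intro x
      obtain ⟨y, hy, z, hz, hyz⟩ := Submodule.mem_sup.mp x.2
      obtain ⟨a, ha⟩ := hy
      refine ⟨a, ?_⟩
      have ha' : R₁ a = y := ha
      have h1 : (x : H) - R₁ a = z := by
        rw [← hyz, ha']; abel
      rw [h1]
      exact hz
    set sel : D → H := fun x => (hsel x).choose with hseldef
    have hselp : ∀ x : D, R₁ ((x : H) - R₁ (sel x)) = 0 := fun x => (hsel x).choose_spec
    set fDl : D →ₗ[ℂ] H :=
      { toFun := fun x => K₀ (sel x)
        map_add' := by
          intro x y
          show K₀ (sel (x + y)) = K₀ (sel x) + K₀ (sel y)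
          rw [← map_add]
          refine wdK ((x + y : D) : H) _ _ (hselp (x + y)) ?_
          have h1 : ((x + y : D) : H) - R₁ (sel x + sel y)
              = (((x : H) - R₁ (sel x)) + ((y : H) - R₁ (sel y))) := by
            rw [map_add, Submodule.coe_add]; abel
          rw [h1, map_add, hselp x, hselp y, add_zero]
        map_smul' := by
          intro m x
          show K₀ (sel (m • x)) = m • K₀ (sel x)
          rw [← map_smul]
          refine wdK ((m • x : D) : H) _ _ (hselp (m • x)) ?_
          have h1 : ((m • x : D) : H) - R₁ (m • sel x)
              = m • ((x : H) - R₁ (sel x)) := by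
            rw [map_smul, Submodule.coe_smul, smul_sub]
          rw [h1, map_smul, hselp x, smul_zero] } with hfDl
    have hfDlapp : ∀ x : D, fDl x = K₀ (sel x) := fun x => rfl
    have hfb : ∀ x : D, ‖fDl x‖ ≤ (Real.sin φ)⁻¹ * ‖x‖ := by
      intro x
      rw [hfDlapp]
      have h1 : ‖K₀ (sel x)‖ ≤ (Real.sin φ)⁻¹ * ‖R₁ (sel x)‖ := hK₀n _
      have h2 : ‖R₁ (sel x)‖ ≤ ‖(x : H)‖ := by
        set k : H := (x : H) - R₁ (sel x) with hk
        have hk0 : R₁ k = 0 := hselp x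
        have hxk : (x : H) = R₁ (sel x) + k := by rw [hk]; abel
        have hnsq := norm_add_sq (𝕜 := ℂ) (R₁ (sel x)) k
        rw [hsym₁ (sel x) k, hk0, inner_zero_right] at hnsq
        simp only [map_zero, mul_zero, add_zero] at hnsq
        rw [hxk]
        nlinarith [norm_nonneg k, norm_nonneg (R₁ (sel x)),
          norm_nonneg (R₁ (sel x) + k)]
      have h3 : ‖(x : H)‖ = ‖x‖ := rfl
      calc ‖K₀ (sel x)‖ ≤ (Real.sin φ)⁻¹ * ‖R₁ (sel x)‖ := h1
        _ ≤ (Real.sin φ)⁻¹ * ‖x‖ := by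
            rw [← h3]
            apply mul_le_mul_of_nonneg_left h2
            positivity
    have hDdense : Dense (D : Set H) := by
      have horthD : Dᗮ = ⊥ := by
        rw [Submodule.eq_bot_iff]
        intro x hx
        rw [Submodule.mem_orthogonal] at hx
        have h1 : R₁ x = 0 := by
          have h2 : ⟪R₁ x, R₁ x⟫_ℂ = 0 := by
            have h3 : ∀ y : H, ⟪R₁ y, x⟫_ℂ = 0 := by
              intro y
              exact hx (R₁ y) (Submodule.mem_sup_left ⟨y, rfl⟩)
            have h4 := h3 (R₁ x)
            rw [hsym₁ (R₁ x) x] at h4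
            rw [hsym₁ x (R₁ x)]
            rw [← hsym₁ (R₁ x) x] at h4
            -- h4 : ⟪R₁ (R₁ x), x⟫ = 0; want ⟪x, R₁ (R₁ x)⟫ = 0
            rw [← inner_conj_symm, h4, map_zero]
          rwa [inner_self_eq_zero] at h2
        have h5 : x ∈ D := Submodule.mem_sup_right (LinearMap.mem_ker.mpr h1)
        have h6 := hx x h5
        rwa [inner_self_eq_zero] at h6
      have h7 : D.topologicalClosure = ⊤ :=
        Submodule.topologicalClosure_eq_top_iff.mpr horthD
      rw [dense_iff_closure_eq, ← Submodule.topologicalClosure_coe, h7, Submodule.top_coe]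
    obtain ⟨K, hKD'⟩ : ∃ K : H →L[ℂ] H, ∀ x : D, K (x : H) = K₀ (sel x) := by
      set fD : D →L[ℂ] H := LinearMap.mkContinuous fDl ((Real.sin φ)⁻¹) hfb with hfD
      refine ⟨fD.extend D.subtypeL, fun x => ?_⟩
      exact ContinuousLinearMap.extend_eq (f := fD) (e := D.subtypeL) hDdense.denseRange_val
        isUniformEmbedding_subtype_val.isUniformInducing x
    have hKD : ∀ (x : H) (hx : x ∈ D), K x = K₀ (sel ⟨x, hx⟩) := fun x hx => hKD' ⟨x, hx⟩
    have hKR : ∀ a : H, K (R₁ a) = K₀ a := by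
      intro a
      have hmem : R₁ a ∈ D := Submodule.mem_sup_left ⟨a, rfl⟩
      rw [hKD (R₁ a) hmem]
      refine wdK (R₁ a) _ a (hselp ⟨R₁ a, hmem⟩) (by rw [sub_self, map_zero])
    refine ⟨K, ?_, ?_, ?_, ?_⟩
    · intro x hx
      have hmem : x ∈ D := Submodule.mem_sup_right (LinearMap.mem_ker.mpr hx)
      rw [hKD x hmem]
      have h1 : K₀ (sel ⟨x, hmem⟩) = K₀ 0 :=
        wdK x _ 0 (hselp ⟨x, hmem⟩) (by rw [map_zero, sub_zero, hx])
      rw [h1, map_zero]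
    · intro x
      have hclosed : IsClosed {y : H | K y ∈ (LinearMap.ker (R₁ : H →ₗ[ℂ] H))ᗮ} :=
        IsClosed.preimage K.continuous (Submodule.isClosed_orthogonal _)
      have hsub : (D : Set H) ⊆ {y : H | K y ∈ (LinearMap.ker (R₁ : H →ₗ[ℂ] H))ᗮ} := by
        intro y hy
        rw [Set.mem_setOf_eq, hKD y hy]
        exact hK₀mem _
      have : closure (D : Set H) ⊆ {y : H | K y ∈ (LinearMap.ker (R₁ : H →ₗ[ℂ] H))ᗮ} :=
        hclosed.closure_subset_iff.mpr hsub
      rw [hDdense.closure_eq] at this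
      exact this (Set.mem_univ x)
    · intro f hf
      set E1 : Set H := {y : H |
        ‖(Real.sin φ : ℂ) • K y + (Complex.I * (Real.cos φ : ℂ)) • y‖ ≤ ‖y‖ ∧
        ‖(Real.sin φ : ℂ) • K y - (Complex.I * (Real.cos φ : ℂ)) • y‖ ≤ ‖y‖} with hE1
      have hc1 : Continuous fun y : H =>
          ‖(Real.sin φ : ℂ) • K y + (Complex.I * (Real.cos φ : ℂ)) • y‖ :=
        ((K.continuous.const_smul _).add (continuous_id.const_smul _)).norm
      have hc2 : Continuous fun y : H =>
          ‖(Real.sin φ : ℂ) • K y - (Complex.I * (Real.cos φ : ℂ)) • y‖ :=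
        ((K.continuous.const_smul _).sub (continuous_id.const_smul _)).norm
      have hclosed : IsClosed E1 := by
        rw [hE1, Set.setOf_and]
        exact (isClosed_le hc1 continuous_norm).inter (isClosed_le hc2 continuous_norm)
      have hsub : (LinearMap.range (R₁ : H →ₗ[ℂ] H) : Set H) ⊆ E1 := by
        rintro y ⟨a, ha⟩
        have ha' : R₁ a = y := ha
        rw [hE1, Set.mem_setOf_eq, ← ha', hKR a, hplus a, hminus a]
        exact ⟨(hTp a).2.2, (hTm a).2.2⟩
      have hfc : f ∈ closure (LinearMap.range (R₁ : H →ₗ[ℂ] H) : Set H) := by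
        have h1 : (LinearMap.range (R₁ : H →ₗ[ℂ] H))ᗮ = LinearMap.ker (R₁ : H →ₗ[ℂ] H) := by
          ext y
          rw [Submodule.mem_orthogonal, LinearMap.mem_ker, ContinuousLinearMap.coe_coe]
          constructor
          · intro hy
            have h2 : ⟪R₁ y, R₁ y⟫_ℂ = 0 := by
              have h3 := hy (R₁ (R₁ y)) ⟨R₁ y, rfl⟩
              rwa [hsym₁ (R₁ y) y] at h3
            rwa [inner_self_eq_zero] at h2
          · intro hy u hu
            obtain ⟨s, hs⟩ := hu
            have hs' : R₁ s = u := hs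
            rw [← hs', hsym₁ s y, hy, inner_zero_right]
        have h2 : (LinearMap.range (R₁ : H →ₗ[ℂ] H)).topologicalClosure
            = (LinearMap.ker (R₁ : H →ₗ[ℂ] H))ᗮ := by
          rw [← Submodule.orthogonal_orthogonal_eq_closure, h1]
        have h3 : f ∈ (LinearMap.range (R₁ : H →ₗ[ℂ] H)).topologicalClosure := by
          rw [h2]; exact hf
        rwa [← SetLike.mem_coe, Submodule.topologicalClosure_coe] at h3
      exact hclosed.closure_subset_iff.mpr hsub hfc
    · ext f
      simp only [ContinuousLinearMap.comp_apply]
      rw [hKR f, hR₂K₀ f]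
end
end

section
/- Let H be a complex Hilbert space, C₁, C₂ ∈ B(H), R_l, R_r ∈ B(H) selfadjoint and nonnegative, 𝓗₁ := (ker R_r)^⊥, 𝓗₂ := (ker R_l)^⊥, and suppose the operator hole L := B(C₁; R_l, R_r) ∩ B(C₂; R_l, R_r) is nonempty, with Q ∈ B(𝓗₁, 𝓗₂) the contraction satisfying C₁ − C₂ = 2·R_l·Q·R_r. Then L consists of the single element ½(C₁ + C₂) if and only if at least one of the following holds: (1) R_l = 0; (2) R_r = 0; (3) Q is a maximal partial isometry, i.e. Q*Q = I on 𝓗₁ or QQ* = I on 𝓗₂. -/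
open ContinuousLinearMap Complex
open scoped InnerProductSpace

noncomputable section

/-- Membership in the operator ball `B(C; R_l, R_r)`. -/
def inBall {H : Type*} [NormedAddCommGroup H] [InnerProductSpace ℂ H] [CompleteSpace H]
    (C Rl Rr T : H →L[ℂ] H) : Prop :=
  ∃ K : H →L[ℂ] H, ‖K‖ ≤ 1 ∧ T = C + Rl.comp (K.comp Rr)

/-- `Q` represents an operator in `B(𝓗₁, 𝓗₂)` with `𝓗₁ = (ker R_r)ᗮ`, `𝓗₂ = (ker R_l)ᗮ`:
it vanishes on `𝓗₁ᗮ = ker R_r` and has range in `𝓗₂`. -/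
def betweenKer {H : Type*} [NormedAddCommGroup H] [InnerProductSpace ℂ H] [CompleteSpace H]
    (Rl Rr Q : H →L[ℂ] H) : Prop :=
  (∀ x : H, Rr x = 0 → Q x = 0) ∧ ∀ x : H, Q x ∈ (LinearMap.ker (Rl : H →ₗ[ℂ] H))ᗮ

namespace Statement4Aux

variable {H : Type*} [NormedAddCommGroup H] [InnerProductSpace ℂ H] [CompleteSpace H]

lemma apply_mem_ker_orth {R : H →L[ℂ] H}
    (hs : ∀ x y : H, ⟪R x, y⟫_ℂ = ⟪x, R y⟫_ℂ) (y : H) : R y ∈ (LinearMap.ker (R : H →ₗ[ℂ] H))ᗮ := by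
  rw [Submodule.mem_orthogonal]
  intro u hu
  have hu' : R u = 0 := hu
  rw [← hs, hu', inner_zero_left]

lemma eq_zero_of_ker_mem_orth {R : H →L[ℂ] H} {z : H}
    (h1 : R z = 0) (h2 : z ∈ (LinearMap.ker (R : H →ₗ[ℂ] H))ᗮ) : z = 0 := by
  have hz : z ∈ LinearMap.ker (R : H →ₗ[ℂ] H) := h1
  have := (Submodule.mem_orthogonal _ z).1 h2 z hz
  exact inner_self_eq_zero.1 this

lemma apply_eq_zero_of_mem_double_orth {R : H →L[ℂ] H}
    (hs : ∀ x y : H, ⟪R x, y⟫_ℂ = ⟪x, R y⟫_ℂ) {z : H}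
    (hz : z ∈ ((LinearMap.ker (R : H →ₗ[ℂ] H))ᗮ)ᗮ) : R z = 0 := by
  have h1 : R (R z) ∈ (LinearMap.ker (R : H →ₗ[ℂ] H))ᗮ := apply_mem_ker_orth hs (R z)
  have h2 : ⟪R (R z), z⟫_ℂ = 0 := (Submodule.mem_orthogonal _ z).1 hz _ h1
  rw [hs (R z) z] at h2
  exact inner_self_eq_zero.1 h2

set_option maxHeartbeats 1000000 in
lemma est {Q : H →L[ℂ] H} (hQn : ‖Q‖ ≤ 1) {v w : H} (hv : v ≠ 0) (hw : w ≠ 0)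
    (t : ℂ) (ht : ‖t‖ ≤ (4 * ‖v‖ * ‖w‖)⁻¹) (h : H) :
    ‖Q h + t • (⟪v - ContinuousLinearMap.adjoint Q (Q v), h⟫_ℂ •
      (w - Q (ContinuousLinearMap.adjoint Q w)))‖ ≤ ‖h‖ := by
  have hQnorm : ∀ z : H, ‖Q z‖ ≤ ‖z‖ := fun z =>
    (Q.le_opNorm z).trans (mul_le_of_le_one_left (norm_nonneg z) hQn)
  have hQan : ‖ContinuousLinearMap.adjoint Q‖ ≤ 1 := by
    rw [LinearIsometryEquiv.norm_map ContinuousLinearMap.adjoint Q]; exact hQn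
  have hQanorm : ∀ z : H, ‖ContinuousLinearMap.adjoint Q z‖ ≤ ‖z‖ := fun z =>
    ((ContinuousLinearMap.adjoint Q).le_opNorm z).trans
      (mul_le_of_le_one_left (norm_nonneg z) hQan)
  set Av := v - ContinuousLinearMap.adjoint Q (Q v) with hAvd
  set Bw := w - Q (ContinuousLinearMap.adjoint Q w) with hBwd
  set Ah := h - ContinuousLinearMap.adjoint Q (Q h) with hAhd
  have hxi : ⟪Av, h⟫_ℂ = ⟪v, Ah⟫_ℂ := by
    simp only [hAvd, hAhd, inner_sub_left, inner_sub_right, adjoint_inner_left,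
      adjoint_inner_right]
  have hQAh : Q Ah = Q h - Q (ContinuousLinearMap.adjoint Q (Q h)) := by rw [hAhd, map_sub]
  have hinner2 : ⟪Q h, Bw⟫_ℂ = ⟪Q Ah, w⟫_ℂ := by
    rw [hQAh, hBwd]
    simp only [inner_sub_left, inner_sub_right]
    congr 1
    rw [← adjoint_inner_left]
    exact adjoint_inner_right _ _ _
  set α := ‖h‖^2 - ‖Q h‖^2 with hα
  have hα0 : 0 ≤ α := by have := hQnorm h; nlinarith [norm_nonneg (Q h)]
  have hAh2 : ‖Ah‖^2 ≤ α := by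
    have e := @norm_sub_sq ℂ _ _ _ _ h (ContinuousLinearMap.adjoint Q (Q h))
    have r1 : ⟪h, ContinuousLinearMap.adjoint Q (Q h)⟫_ℂ = ⟪Q h, Q h⟫_ℂ :=
      adjoint_inner_right Q h (Q h)
    rw [r1, inner_self_eq_norm_sq] at e
    have r3 : ‖ContinuousLinearMap.adjoint Q (Q h)‖ ≤ ‖Q h‖ := hQanorm (Q h)
    rw [← hAhd] at e
    nlinarith [norm_nonneg (ContinuousLinearMap.adjoint Q (Q h)), norm_nonneg (Q h)]
  have hxib : ‖⟪Av, h⟫_ℂ‖ ≤ ‖v‖ * ‖Ah‖ := by rw [hxi]; exact norm_inner_le_norm _ _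
  have hBwb : ‖Bw‖ ≤ 2 * ‖w‖ := by
    rw [hBwd]
    have h1 : ‖Q (ContinuousLinearMap.adjoint Q w)‖ ≤ ‖w‖ :=
      (hQnorm _).trans (hQanorm w)
    have := norm_sub_le w (Q (ContinuousLinearMap.adjoint Q w))
    linarith
  have hQhBw : ‖⟪Q h, Bw⟫_ℂ‖ ≤ ‖Ah‖ * ‖w‖ := by
    rw [hinner2]
    exact (norm_inner_le_norm _ _).trans
      (mul_le_mul_of_nonneg_right (hQnorm Ah) (norm_nonneg w))
  have hv0 : (0:ℝ) < ‖v‖ := norm_pos_iff.2 hv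
  have hw0 : (0:ℝ) < ‖w‖ := norm_pos_iff.2 hw
  have hs : ‖t‖ * (‖v‖ * ‖w‖) ≤ 4⁻¹ := by
    have h4 : (0:ℝ) < 4 * ‖v‖ * ‖w‖ := by positivity
    calc ‖t‖ * (‖v‖ * ‖w‖) ≤ (4 * ‖v‖ * ‖w‖)⁻¹ * (‖v‖ * ‖w‖) := by
          apply mul_le_mul_of_nonneg_right ht (by positivity)
      _ = 4⁻¹ := by field_simp
  have hs0 : (0:ℝ) ≤ ‖t‖ * (‖v‖ * ‖w‖) := by positivity
  set X' := t • (⟪Av, h⟫_ℂ • Bw) with hX'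
  -- inner product bound
  have hip : ⟪Q h, X'⟫_ℂ = t * (⟪Av, h⟫_ℂ * ⟪Q h, Bw⟫_ℂ) := by
    rw [hX']; simp [inner_smul_right]
  have hre2 : RCLike.re ⟪Q h, X'⟫_ℂ ≤ 4⁻¹ * α := by
    have e1 : RCLike.re ⟪Q h, X'⟫_ℂ ≤ ‖t‖ * (‖⟪Av, h⟫_ℂ‖ * ‖⟪Q h, Bw⟫_ℂ‖) := by
      calc RCLike.re ⟪Q h, X'⟫_ℂ ≤ ‖⟪Q h, X'⟫_ℂ‖ := RCLike.re_le_norm _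
        _ = ‖t‖ * (‖⟪Av, h⟫_ℂ‖ * ‖⟪Q h, Bw⟫_ℂ‖) := by rw [hip, norm_mul, norm_mul]
    have e2 : ‖t‖ * (‖⟪Av, h⟫_ℂ‖ * ‖⟪Q h, Bw⟫_ℂ‖) ≤ ‖t‖ * ((‖v‖ * ‖Ah‖) * (‖Ah‖ * ‖w‖)) := by
      gcongr
    have e3 : ‖t‖ * ((‖v‖ * ‖Ah‖) * (‖Ah‖ * ‖w‖)) = (‖t‖ * (‖v‖ * ‖w‖)) * ‖Ah‖^2 := by ring
    have e4 : (‖t‖ * (‖v‖ * ‖w‖)) * ‖Ah‖^2 ≤ 4⁻¹ * α :=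
      mul_le_mul hs hAh2 (sq_nonneg _) (by norm_num)
    linarith
  have hXn2 : ‖X'‖^2 ≤ 4⁻¹ * α := by
    have hXn : ‖X'‖ ≤ ‖t‖ * ((‖v‖ * ‖Ah‖) * (2 * ‖w‖)) := by
      rw [hX', norm_smul, norm_smul]
      gcongr
    have hb : ‖X'‖^2 ≤ (‖t‖ * ((‖v‖ * ‖Ah‖) * (2 * ‖w‖)))^2 :=
      pow_le_pow_left₀ (norm_nonneg _) hXn 2
    have hc : (‖t‖ * ((‖v‖ * ‖Ah‖) * (2 * ‖w‖)))^2
        = 4 * (‖t‖ * (‖v‖ * ‖w‖))^2 * ‖Ah‖^2 := by ring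
    have hd : (‖t‖ * (‖v‖ * ‖w‖))^2 ≤ 4⁻¹ * 4⁻¹ := by
      rw [sq]; exact mul_le_mul hs hs hs0 (by norm_num)
    nlinarith [sq_nonneg ‖Ah‖, hAh2, hα0]
  have e : ‖Q h + X'‖^2 = ‖Q h‖^2 + 2 * RCLike.re ⟪Q h, X'⟫_ℂ + ‖X'‖^2 :=
    norm_add_sq (Q h) X'
  have hfin : ‖Q h + X'‖^2 ≤ ‖h‖^2 := by
    have hQh2 : ‖Q h‖^2 = ‖h‖^2 - α := by rw [hα]; ring
    linarith
  nlinarith [hfin, norm_nonneg h, norm_nonneg (Q h + X')]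

set_option maxHeartbeats 1000000 in
lemma mainA (Rl Rr Q K₁ K₂ : H →L[ℂ] H)
    (hls : ∀ x y : H, ⟪Rl x, y⟫_ℂ = ⟪x, Rl y⟫_ℂ)
    (hrs : ∀ x y : H, ⟪Rr x, y⟫_ℂ = ⟪x, Rr y⟫_ℂ)
    (hQ2 : ∀ x : H, Q x ∈ (LinearMap.ker (Rl : H →ₗ[ℂ] H))ᗮ)
    (h3 : ∀ x ∈ (LinearMap.ker (Rr : H →ₗ[ℂ] H))ᗮ, ContinuousLinearMap.adjoint Q (Q x) = x)
    (hK₁ : ‖K₁‖ ≤ 1) (hK₂ : ‖K₂‖ ≤ 1)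
    (hd : Rl.comp (K₂.comp Rr) - Rl.comp (K₁.comp Rr) = (2:ℂ) • (Rl.comp (Q.comp Rr))) :
    Rl.comp (K₁.comp Rr) + Rl.comp (Q.comp Rr) = 0 := by
  haveI : CompleteSpace (LinearMap.ker (Rl : H →ₗ[ℂ] H)) := (isClosed_ker Rl).completeSpace_coe
  ext x
  simp only [ContinuousLinearMap.add_apply, ContinuousLinearMap.comp_apply,
    ContinuousLinearMap.zero_apply]
  set h := Rr x with hh
  have hhmem : h ∈ (LinearMap.ker (Rr : H →ₗ[ℂ] H))ᗮ := apply_mem_ker_orth hrs x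
  have hQh2 : ‖Q h‖^2 = ‖h‖^2 := by
    have h1 : ⟪Q h, Q h⟫_ℂ = ⟪h, h⟫_ℂ := by
      rw [← adjoint_inner_left, h3 h hhmem]
    have h2 := congrArg RCLike.re h1
    rwa [inner_self_eq_norm_sq, inner_self_eq_norm_sq] at h2
  set E := (LinearMap.ker (Rl : H →ₗ[ℂ] H))ᗮ with hE
  set P : H →L[ℂ] H := E.subtypeL.comp (E.orthogonalProjectionOnto) with hP
  have hPnorm : ∀ z : H, ‖P z‖ ≤ ‖z‖ := by
    intro z
    have hz : P z = (E.orthogonalProjectionOnto z : H) := rfl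
    rw [hz]
    exact ((E.orthogonalProjectionOnto).le_opNorm z).trans
      (mul_le_of_le_one_left (norm_nonneg z) (Submodule.orthogonalProjectionOnto_norm_le E))
  have hPzero : ∀ z ∈ LinearMap.ker (Rl : H →ₗ[ℂ] H), P z = 0 := by
    intro z hz
    have hz' : P z = (E.orthogonalProjectionOnto z : H) := rfl
    rw [hz', Submodule.orthogonalProjectionOnto_apply_of_mem_orthogonal
      (Submodule.le_orthogonal_orthogonal _ hz)]
    simp
  have hPQ : ∀ z : H, P (Q z) = Q z := by
    intro z
    have hz : P (Q z) = (E.orthogonalProjectionOnto (Q z) : H) := rfl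
    rw [hz]
    exact Submodule.starProjection_eq_self_iff.2 (hQ2 z)
  have hker : K₂ h - K₁ h - (2:ℂ) • Q h ∈ LinearMap.ker (Rl : H →ₗ[ℂ] H) := by
    have hdx := ContinuousLinearMap.ext_iff.1 hd x
    simp only [ContinuousLinearMap.sub_apply, ContinuousLinearMap.comp_apply,
      ContinuousLinearMap.smul_apply] at hdx
    have hz : Rl (K₂ h - K₁ h - (2:ℂ) • Q h) = 0 := by
      rw [map_sub, map_sub, map_smul, hdx, sub_self]
    exact hz
  set a := P (K₁ h) + Q h with ha
  have h1 : ‖a - Q h‖ ≤ ‖h‖ := by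
    have hz : a - Q h = P (K₁ h) := by rw [ha]; abel
    rw [hz]
    exact (hPnorm _).trans ((K₁.le_opNorm h).trans
      (mul_le_of_le_one_left (norm_nonneg h) hK₁))
  have hPK₂ : P (K₂ h) = a + Q h := by
    have hdecomp : K₂ h = (K₂ h - K₁ h - (2:ℂ) • Q h) + K₁ h + (2:ℂ) • Q h := by module
    rw [hdecomp, map_add, map_add, map_smul, hPzero _ hker, hPQ, ha]
    module
  have h2 : ‖a + Q h‖ ≤ ‖h‖ := by
    rw [← hPK₂]
    exact (hPnorm _).trans ((K₂.le_opNorm h).trans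
      (mul_le_of_le_one_left (norm_nonneg h) hK₂))
  have hpar := parallelogram_law_with_norm ℂ a (Q h)
  have ha0 : a = 0 := by
    have e1 : ‖a + Q h‖ * ‖a + Q h‖ ≤ ‖h‖ * ‖h‖ := mul_self_le_mul_self (norm_nonneg _) h2
    have e2 : ‖a - Q h‖ * ‖a - Q h‖ ≤ ‖h‖ * ‖h‖ := mul_self_le_mul_self (norm_nonneg _) h1
    have e3 : ‖Q h‖ * ‖Q h‖ = ‖h‖ * ‖h‖ := by
      have e := hQh2; rw [pow_two, pow_two] at e; exact e
    have e4 : ‖a‖ * ‖a‖ ≤ 0 := by linarith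
    exact norm_eq_zero.1 (mul_self_eq_zero.1 (le_antisymm e4 (mul_self_nonneg _)))
  have hsplit : K₁ h + Q h = (K₁ h - P (K₁ h)) + a := by rw [ha]; abel
  have hmem : K₁ h - P (K₁ h) ∈ Eᗮ := by
    have hz := Submodule.sub_starProjection_mem_orthogonal (K := E) (K₁ h)
    exact hz
  have hRl0 : Rl (K₁ h + Q h) = 0 := by
    rw [hsplit, ha0, add_zero]
    exact apply_eq_zero_of_mem_double_orth hls hmem
  rw [map_add] at hRl0
  exact hRl0

end Statement4Aux

open Statement4Aux

set_option maxHeartbeats 1000000 in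
theorem statement4 {H : Type*} [NormedAddCommGroup H] [InnerProductSpace ℂ H] [CompleteSpace H]
    (C₁ C₂ Rl Rr Q : H →L[ℂ] H) (hl : Rl.IsPositive) (hr : Rr.IsPositive)
    (hQ : betweenKer Rl Rr Q) (hQn : ‖Q‖ ≤ 1)
    (hQeq : C₁ - C₂ = (2 : ℂ) • (Rl.comp (Q.comp Rr))) :
    (∀ T : H →L[ℂ] H,
        (inBall C₁ Rl Rr T ∧ inBall C₂ Rl Rr T) ↔ T = (2 : ℂ)⁻¹ • (C₁ + C₂)) ↔
      (Rl = 0 ∨ Rr = 0 ∨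
        (∀ x ∈ (LinearMap.ker (Rr : H →ₗ[ℂ] H))ᗮ, ContinuousLinearMap.adjoint Q (Q x) = x) ∨
        (∀ x ∈ (LinearMap.ker (Rl : H →ₗ[ℂ] H))ᗮ, Q (ContinuousLinearMap.adjoint Q x) = x)) := by
  have hls : ∀ x y : H, ⟪Rl x, y⟫_ℂ = ⟪x, Rl y⟫_ℂ := fun x y => hl.1 x y
  have hrs : ∀ x y : H, ⟪Rr x, y⟫_ℂ = ⟪x, Rr y⟫_ℂ := fun x y => hr.1 x y
  have hQadj_mem : ∀ z : H, ContinuousLinearMap.adjoint Q z ∈ (LinearMap.ker (Rr : H →ₗ[ℂ] H))ᗮ := by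
    intro z
    rw [Submodule.mem_orthogonal]
    intro u hu
    have hu' : Rr u = 0 := hu
    rw [adjoint_inner_right, hQ.1 u hu', inner_zero_left]
  have hQRr : Rl.comp (Q.comp Rr) = (2:ℂ)⁻¹ • (C₁ - C₂) := by
    rw [hQeq, smul_smul]; norm_num
  have hmid1 : (2:ℂ)⁻¹ • (C₁ + C₂) = C₁ - Rl.comp (Q.comp Rr) := by rw [hQRr]; module
  have hmid2 : (2:ℂ)⁻¹ • (C₁ + C₂) = C₂ + Rl.comp (Q.comp Rr) := by rw [hQRr]; module
  constructor
  · -- uniqueness → alternatives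
    intro hG
    by_contra hcon
    push_neg at hcon
    obtain ⟨-, -, h3a, h3b⟩ := hcon
    obtain ⟨v, hvmem, hvne⟩ := h3a
    obtain ⟨w, hwmem, hwne⟩ := h3b
    have hvne0 : v ≠ 0 := by rintro rfl; simp at hvne
    have hwne0 : w ≠ 0 := by rintro rfl; simp at hwne
    set Av := v - ContinuousLinearMap.adjoint Q (Q v) with hAvd
    set Bw := w - Q (ContinuousLinearMap.adjoint Q w) with hBwd
    have hAvne : Av ≠ 0 := sub_ne_zero.2 (Ne.symm hvne)
    have hBwne : Bw ≠ 0 := sub_ne_zero.2 (Ne.symm hwne)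
    have hv0 : (0:ℝ) < ‖v‖ := norm_pos_iff.2 hvne0
    have hw0 : (0:ℝ) < ‖w‖ := norm_pos_iff.2 hwne0
    set c : ℝ := (4 * ‖v‖ * ‖w‖)⁻¹ with hc
    have hc0 : 0 < c := by rw [hc]; positivity
    set X : H →L[ℂ] H := (c:ℂ) • (innerSL ℂ Av).smulRight Bw with hX
    have hXapp : ∀ z : H, X z = (c:ℂ) • (⟪Av, z⟫_ℂ • Bw) := by
      intro z; rw [hX]; simp
    have hnc : ∀ t : ℂ, ‖t‖ = ‖(c:ℂ)‖ → ‖t‖ ≤ (4 * ‖v‖ * ‖w‖)⁻¹ := by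
      intro t htc
      have hcc : ‖(c:ℂ)‖ = c := by
        rw [Complex.norm_real]; exact _root_.abs_of_nonneg hc0.le
      rw [htc, hcc, hc]
    have hXQ : ‖X + Q‖ ≤ 1 := by
      apply opNorm_le_bound _ zero_le_one
      intro z
      rw [one_mul]
      have hz : (X + Q) z = Q z + (c:ℂ) • (⟪Av, z⟫_ℂ • Bw) := by
        rw [ContinuousLinearMap.add_apply, hXapp z, add_comm]
      rw [hz]
      exact est hQn hvne0 hwne0 _ (hnc _ rfl) z
    have hXQ' : ‖X - Q‖ ≤ 1 := by
      apply opNorm_le_bound _ zero_le_one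
      intro z
      rw [one_mul]
      have hz : ‖(X - Q) z‖ = ‖Q z + (-(c:ℂ)) • (⟪Av, z⟫_ℂ • Bw)‖ := by
        rw [ContinuousLinearMap.sub_apply, hXapp z, ← norm_neg]
        congr 1
        rw [neg_smul]
        abel
      rw [hz]
      exact est hQn hvne0 hwne0 _ (hnc _ (by rw [norm_neg])) z
    set T := (2:ℂ)⁻¹ • (C₁ + C₂) + Rl.comp (X.comp Rr) with hT
    have hm1 : inBall C₁ Rl Rr T := by
      refine ⟨X - Q, hXQ', ?_⟩
      have hsplit : Rl.comp ((X - Q).comp Rr) = Rl.comp (X.comp Rr) - Rl.comp (Q.comp Rr) := by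
        ext z
        simp [ContinuousLinearMap.sub_apply, ContinuousLinearMap.comp_apply, map_sub]
      rw [hT, hsplit, hmid1]
      abel
    have hm2 : inBall C₂ Rl Rr T := by
      refine ⟨X + Q, hXQ, ?_⟩
      have hsplit : Rl.comp ((X + Q).comp Rr) = Rl.comp (X.comp Rr) + Rl.comp (Q.comp Rr) := by
        ext z
        simp [ContinuousLinearMap.add_apply, ContinuousLinearMap.comp_apply, map_add]
      rw [hT, hsplit, hmid2]
      abel
    have hTeq := (hG T).1 ⟨hm1, hm2⟩
    have hXRr : Rl.comp (X.comp Rr) = 0 := by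
      rw [hT] at hTeq
      exact add_eq_left.1 hTeq
    -- contradiction
    have hRrAv : Rr Av ≠ 0 := by
      intro h0
      have hAvmem : Av ∈ (LinearMap.ker (Rr : H →ₗ[ℂ] H))ᗮ :=
        Submodule.sub_mem _ hvmem (hQadj_mem (Q v))
      exact hAvne (eq_zero_of_ker_mem_orth h0 hAvmem)
    have hRlBw : Rl Bw ≠ 0 := by
      intro h0
      have hBwmem : Bw ∈ (LinearMap.ker (Rl : H →ₗ[ℂ] H))ᗮ :=
        Submodule.sub_mem _ hwmem (hQ.2 (ContinuousLinearMap.adjoint Q w))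
      exact hBwne (eq_zero_of_ker_mem_orth h0 hBwmem)
    have happ := ContinuousLinearMap.ext_iff.1 hXRr (Rr Av)
    simp only [ContinuousLinearMap.comp_apply, ContinuousLinearMap.zero_apply] at happ
    rw [hXapp, map_smul, map_smul, ← hrs Av (Rr Av)] at happ
    rcases smul_eq_zero.1 happ with hcz | happ2
    · exact (Complex.ofReal_ne_zero.2 hc0.ne') hcz
    rcases smul_eq_zero.1 happ2 with hiz | hRl0
    · exact (inner_self_eq_zero.1 hiz ▸ hRrAv) rfl
    · exact hRlBw hRl0
  · -- alternatives → uniqueness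
    intro hR T
    constructor
    · rintro ⟨⟨K₁, hK₁, hT₁⟩, ⟨K₂, hK₂, hT₂⟩⟩
      have hcc : C₁ + Rl.comp (K₁.comp Rr) = C₂ + Rl.comp (K₂.comp Rr) := hT₁.symm.trans hT₂
      have hd : Rl.comp (K₂.comp Rr) - Rl.comp (K₁.comp Rr) = (2:ℂ) • (Rl.comp (Q.comp Rr)) := by
        rw [← hQeq]
        rw [sub_eq_sub_iff_add_eq_add]
        rw [add_comm (Rl.comp (K₂.comp Rr)) C₂]
        exact hcc.symm
      rcases hR with hcase | hcase | hcase | hcase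
      · -- Rl = 0
        subst hcase
        have hTC : T = C₁ := by rw [hT₁]; simp
        have hC : C₁ = C₂ := by
          have hz := hQeq; simp only [ContinuousLinearMap.zero_comp, smul_zero] at hz
          exact sub_eq_zero.1 hz
        rw [hTC, hC]
        module
      · -- Rr = 0
        subst hcase
        have hTC : T = C₁ := by rw [hT₁]; simp
        have hC : C₁ = C₂ := by
          have hz := hQeq; simp only [ContinuousLinearMap.comp_zero, smul_zero] at hz
          exact sub_eq_zero.1 hz
        rw [hTC, hC]
        module
      · -- Q*Q = 1 on H₁
        have hz := mainA Rl Rr Q K₁ K₂ hls hrs hQ.2 hcase hK₁ hK₂ hd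
        rw [hT₁, hmid1, eq_neg_of_add_eq_zero_left hz]
        abel
      · -- QQ* = 1 on H₂
        have hQadj2 : ∀ x ∈ (LinearMap.ker (Rl : H →ₗ[ℂ] H))ᗮ,
            ContinuousLinearMap.adjoint (ContinuousLinearMap.adjoint Q)
              (ContinuousLinearMap.adjoint Q x) = x := by
          intro x hx; rw [adjoint_adjoint]; exact hcase x hx
        have hK₁' : ‖ContinuousLinearMap.adjoint K₁‖ ≤ 1 := by
          rw [LinearIsometryEquiv.norm_map ContinuousLinearMap.adjoint K₁]; exact hK₁
        have hK₂' : ‖ContinuousLinearMap.adjoint K₂‖ ≤ 1 := by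
          rw [LinearIsometryEquiv.norm_map ContinuousLinearMap.adjoint K₂]; exact hK₂
        have hd2 : Rl.comp (K₂.comp Rr) - Rl.comp (K₁.comp Rr)
            = Rl.comp (Q.comp Rr) + Rl.comp (Q.comp Rr) := by rw [hd, two_smul]
        have hd2' := congrArg (fun S : H →L[ℂ] H => ContinuousLinearMap.adjoint S) hd2
        simp only [map_sub, map_add, adjoint_comp, (isSelfAdjoint_iff'.1 hl.isSelfAdjoint), (isSelfAdjoint_iff'.1 hr.isSelfAdjoint),
          ContinuousLinearMap.comp_assoc] at hd2'
        have hd' : Rr.comp ((ContinuousLinearMap.adjoint K₂).comp Rl)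
            - Rr.comp ((ContinuousLinearMap.adjoint K₁).comp Rl)
            = (2:ℂ) • (Rr.comp ((ContinuousLinearMap.adjoint Q).comp Rl)) := by
          rw [two_smul]; exact hd2'
        have hz' := mainA Rr Rl (ContinuousLinearMap.adjoint Q)
          (ContinuousLinearMap.adjoint K₁) (ContinuousLinearMap.adjoint K₂)
          hrs hls hQadj_mem hQadj2 hK₁' hK₂' hd'
        have hz'' := congrArg (fun S : H →L[ℂ] H => ContinuousLinearMap.adjoint S) hz'
        simp only [map_add, adjoint_comp, adjoint_adjoint, (isSelfAdjoint_iff'.1 hl.isSelfAdjoint), (isSelfAdjoint_iff'.1 hr.isSelfAdjoint),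
          ContinuousLinearMap.comp_assoc, map_zero] at hz''
        rw [hT₁, hmid1, eq_neg_of_add_eq_zero_left hz'']
        abel
    · rintro rfl
      refine ⟨⟨-Q, by simpa using hQn, ?_⟩, ⟨Q, hQn, hmid2⟩⟩
      have hsplit : Rl.comp ((-Q).comp Rr) = -(Rl.comp (Q.comp Rr)) := by
        ext z; simp
      rw [hmid1, hsplit, sub_eq_add_neg]
end
end

section
/- Let K₁, K₂ be complex Hilbert spaces and let U ∈ B(K₂, K₁) and V ∈ B(K₁, K₂) be contractions. Then |⟨(I − VU)f, g⟩| ≤ ‖D_U f‖·‖D_{V*} g‖ holds for all f, g ∈ K₂ if and only if U = V*. -/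
open ContinuousLinearMap Complex
open scoped InnerProductSpace

noncomputable section

section aux
variable {H K : Type*} [NormedAddCommGroup H] [InnerProductSpace ℂ H] [CompleteSpace H]
    [NormedAddCommGroup K] [InnerProductSpace ℂ K] [CompleteSpace K]

lemma one_sub_sa (T : H →L[ℂ] K) :
    IsSelfAdjoint ((1 : H →L[ℂ] H) - (ContinuousLinearMap.adjoint T).comp T) := by
  rw [isSelfAdjoint_iff, star_sub, star_one, star_eq_adjoint, adjoint_comp, adjoint_adjoint]

lemma one_sub_nonneg (T : H →L[ℂ] K) (hT : ‖T‖ ≤ 1) :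
    (0 : H →L[ℂ] H) ≤ 1 - (ContinuousLinearMap.adjoint T).comp T := by
  rw [ContinuousLinearMap.nonneg_iff_isPositive]
  refine ⟨IsSelfAdjoint.isSymmetric (one_sub_sa T), fun x => ?_⟩
  have hTx : ‖T x‖ ≤ ‖x‖ := by
    calc ‖T x‖ ≤ ‖T‖ * ‖x‖ := T.le_opNorm x
    _ ≤ 1 * ‖x‖ := by gcongr
    _ = ‖x‖ := one_mul _
  have : ((1 : H →L[ℂ] H) - (ContinuousLinearMap.adjoint T).comp T).reApplyInnerSelf x
      = ‖x‖ ^ 2 - ‖T x‖ ^ 2 := by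
    simp only [ContinuousLinearMap.reApplyInnerSelf, sub_apply, one_apply_eq_self, comp_apply,
      inner_sub_left, map_sub, adjoint_inner_left, inner_self_eq_norm_sq]
  rw [this]
  nlinarith [norm_nonneg (T x), norm_nonneg x]

lemma opSqrt_sa (A : H →L[ℂ] H) : IsSelfAdjoint (opSqrt A) :=
  cfc_predicate Real.sqrt A

lemma opSqrt_mul_self {A : H →L[ℂ] H} (hA : (0 : H →L[ℂ] H) ≤ A) :
    opSqrt A * opSqrt A = A := by
  unfold opSqrt
  rw [← cfc_mul Real.sqrt Real.sqrt A]
  have h : (spectrum ℝ A).EqOn (fun x => Real.sqrt x * Real.sqrt x) (fun x : ℝ => x) := by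
    intro x hx
    exact Real.mul_self_sqrt (spectrum_nonneg_of_nonneg hA hx)
  rw [cfc_congr h, cfc_id' ℝ A]

lemma defect_inner (T : H →L[ℂ] K) (hT : ‖T‖ ≤ 1) (f g : H) :
    ⟪defectOp T f, defectOp T g⟫_ℂ = ⟪f, g⟫_ℂ - ⟪T f, T g⟫_ℂ := by
  have hsa : IsSelfAdjoint (defectOp T) := opSqrt_sa _
  have hadj : ContinuousLinearMap.adjoint (defectOp T) = defectOp T :=
    isSelfAdjoint_iff'.mp hsa
  have hmul := opSqrt_mul_self (one_sub_nonneg T hT)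
  calc ⟪defectOp T f, defectOp T g⟫_ℂ
      = ⟪ContinuousLinearMap.adjoint (defectOp T) (defectOp T f), g⟫_ℂ := by
        rw [adjoint_inner_left]
    _ = ⟪(defectOp T * defectOp T) f, g⟫_ℂ := by rw [hadj]; rfl
    _ = ⟪((1 : H →L[ℂ] H) - (ContinuousLinearMap.adjoint T).comp T) f, g⟫_ℂ := by
        exact congrArg (fun A : H →L[ℂ] H => ⟪A f, g⟫_ℂ) hmul
    _ = ⟪f, g⟫_ℂ - ⟪T f, T g⟫_ℂ := by
        simp only [sub_apply, one_apply_eq_self, comp_apply, inner_sub_left, adjoint_inner_left]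

lemma defect_norm_sq (T : H →L[ℂ] K) (hT : ‖T‖ ≤ 1) (f : H) :
    ‖defectOp T f‖ ^ 2 = ‖f‖ ^ 2 - ‖T f‖ ^ 2 := by
  have h := defect_inner T hT f f
  have h2 : ‖defectOp T f‖ ^ 2 = RCLike.re (⟪f, f⟫_ℂ - ⟪T f, T f⟫_ℂ) := by
    rw [← h, inner_self_eq_norm_sq]
  rw [h2, map_sub, inner_self_eq_norm_sq, inner_self_eq_norm_sq]

lemma codefect_eq (V : K →L[ℂ] H) :
    codefectOp V = defectOp (ContinuousLinearMap.adjoint V) := by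
  unfold codefectOp defectOp
  rw [adjoint_adjoint]

end aux

theorem statement8 {K₁ K₂ : Type*}
    [NormedAddCommGroup K₁] [InnerProductSpace ℂ K₁] [CompleteSpace K₁]
    [NormedAddCommGroup K₂] [InnerProductSpace ℂ K₂] [CompleteSpace K₂]
    (U : K₂ →L[ℂ] K₁) (V : K₁ →L[ℂ] K₂) (hU : ‖U‖ ≤ 1) (hV : ‖V‖ ≤ 1) :
    (∀ f g : K₂,
        ‖⟪((1 : K₂ →L[ℂ] K₂) - V.comp U) f, g⟫_ℂ‖ ≤ ‖defectOp U f‖ * ‖codefectOp V g‖) ↔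
      U = ContinuousLinearMap.adjoint V := by
  have hVa : ‖ContinuousLinearMap.adjoint V‖ ≤ 1 := by
    rw [LinearIsometryEquiv.norm_map]; exact hV
  constructor
  · intro h
    refine ContinuousLinearMap.ext fun f => ?_
    have hf := h f f
    have hd1 : ‖defectOp U f‖ ^ 2 = ‖f‖ ^ 2 - ‖U f‖ ^ 2 := defect_norm_sq U hU f
    have hd2 : ‖codefectOp V f‖ ^ 2
        = ‖f‖ ^ 2 - ‖ContinuousLinearMap.adjoint V f‖ ^ 2 := by
      rw [codefect_eq]; exact defect_norm_sq _ hVa f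
    have hz : ⟪((1 : K₂ →L[ℂ] K₂) - V.comp U) f, f⟫_ℂ
        = ⟪f, f⟫_ℂ - ⟪U f, ContinuousLinearMap.adjoint V f⟫_ℂ := by
      have h2 : ⟪(V.comp U) f, f⟫_ℂ = ⟪U f, ContinuousLinearMap.adjoint V f⟫_ℂ :=
        (adjoint_inner_right V (U f) f).symm
      rw [sub_apply, one_apply_eq_self, inner_sub_left, h2]
    rw [hz] at hf
    have hre : ‖f‖ ^ 2 - RCLike.re ⟪U f, ContinuousLinearMap.adjoint V f⟫_ℂ
        ≤ ‖defectOp U f‖ * ‖codefectOp V f‖ := by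
      calc ‖f‖ ^ 2 - RCLike.re ⟪U f, ContinuousLinearMap.adjoint V f⟫_ℂ
          = RCLike.re (⟪f, f⟫_ℂ - ⟪U f, ContinuousLinearMap.adjoint V f⟫_ℂ) := by
            rw [map_sub, inner_self_eq_norm_sq]
        _ ≤ ‖⟪f, f⟫_ℂ - ⟪U f, ContinuousLinearMap.adjoint V f⟫_ℂ‖ := RCLike.re_le_norm _
        _ ≤ _ := hf
    have hexp : ‖U f - ContinuousLinearMap.adjoint V f‖ ^ 2
        = ‖U f‖ ^ 2 - 2 * RCLike.re ⟪U f, ContinuousLinearMap.adjoint V f⟫_ℂ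
          + ‖ContinuousLinearMap.adjoint V f‖ ^ 2 := norm_sub_sq _ _
    have h0 : ‖U f - ContinuousLinearMap.adjoint V f‖ = 0 := by
      nlinarith [sq_nonneg (‖defectOp U f‖ - ‖codefectOp V f‖),
        norm_nonneg (defectOp U f), norm_nonneg (codefectOp V f),
        norm_nonneg (U f - ContinuousLinearMap.adjoint V f)]
    exact sub_eq_zero.mp (norm_eq_zero.mp h0)
  · intro hUV f g
    subst hUV
    have key := defect_inner (ContinuousLinearMap.adjoint V) hVa f g
    have e1 : ⟪((1 : K₂ →L[ℂ] K₂) - V.comp (ContinuousLinearMap.adjoint V)) f, g⟫_ℂ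
        = ⟪defectOp (ContinuousLinearMap.adjoint V) f,
            defectOp (ContinuousLinearMap.adjoint V) g⟫_ℂ := by
      rw [key, sub_apply, one_apply_eq_self, inner_sub_left, comp_apply]
      have h2 : ⟪ContinuousLinearMap.adjoint V f, ContinuousLinearMap.adjoint V g⟫_ℂ
          = ⟪V (ContinuousLinearMap.adjoint V f), g⟫_ℂ :=
        adjoint_inner_right V _ g
      rw [h2]
    rw [e1, codefect_eq]
    exact norm_inner_le_norm _ _
end
end

section
/- Let H be a complex Hilbert space, φ ∈ (0, π/2), and let K ∈ C_H(φ) be a normal operator (K*K = KK*) whose spectrum satisfies σ(K) ⊆ ∂L_φ, where ∂L_φ := {z ∈ ℂ : |z| ≤ 1 and (|z·sin φ + i·cos φ| = 1 or |z·sin φ − i·cos φ| = 1)}. Then K is an extreme point of the convex set C_H(φ). -/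
open ContinuousLinearMap Complex
open scoped InnerProductSpace

noncomputable section

/-- Strict-convexity identity for Hilbert space norms. -/
private lemma convex_sq_norm {H : Type*} [NormedAddCommGroup H] [InnerProductSpace ℂ H]
    (x y : H) (t : ℝ) (ht0 : 0 ≤ t) (ht1 : t ≤ 1) :
    ‖(t:ℂ) • x + ((1-t:ℝ):ℂ) • y‖^2 = t*‖x‖^2 + (1-t)*‖y‖^2 - t*(1-t)*‖x-y‖^2 := by
  have h1 := norm_add_sq (𝕜 := ℂ) ((t:ℂ) • x) (((1-t:ℝ):ℂ) • y)
  have h2 := norm_sub_sq (𝕜 := ℂ) x y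
  rw [inner_smul_left, inner_smul_right, norm_smul, norm_smul] at h1
  simp only [Complex.norm_real, Real.norm_eq_abs, RCLike.star_def, Complex.conj_ofReal,
    ← mul_assoc, ← Complex.ofReal_mul, Complex.re_ofReal_mul, RCLike.re_to_complex] at h1
  rw [h1]
  rw [_root_.abs_of_nonneg ht0, _root_.abs_of_nonneg (by linarith : (0:ℝ) ≤ 1 - t)]
  rw [RCLike.re_to_complex] at h2
  rw [h2]; ring

private lemma cfc_affine' {H : Type*} [NormedAddCommGroup H] [InnerProductSpace ℂ H]
    [CompleteSpace H] (K : H →L[ℂ] H) [IsStarNormal K] (a b : ℂ) :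
    cfc (fun z : ℂ => z * a + b) K = a • K + b • 1 := by
  have : (fun z : ℂ => z * a + b) = fun z : ℂ => a * z + b := by ext z; ring
  rw [this, cfc_add .., cfc_const_mul .., cfc_id' ℂ K, cfc_const b K]
  simp [Algebra.algebraMap_eq_smul_one]

private lemma defect_cfc {H : Type*} [NormedAddCommGroup H] [InnerProductSpace ℂ H]
    [CompleteSpace H] (K : H →L[ℂ] H) [IsStarNormal K] (f : ℂ → ℂ) (hf : Continuous f) :
    1 - star (cfc f K) * cfc f K = cfc (fun z => 1 - star (f z) * f z) K := by
  rw [cfc_sub _ _ K (by fun_prop) (by fun_prop), cfc_mul _ _ K (by fun_prop) (by fun_prop),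
    cfc_star, cfc_const (1:ℂ) K, map_one]

private lemma one_sub_star_mul_self (w : ℂ) (h : ‖w‖ = 1) : 1 - star w * w = 0 := by
  rw [RCLike.star_def, Complex.conj_mul']
  norm_cast
  rw [h]; norm_num

set_option maxHeartbeats 1600000 in
theorem statement11 {H : Type*} [NormedAddCommGroup H] [InnerProductSpace ℂ H] [CompleteSpace H]
    (K : H →L[ℂ] H) (φ : ℝ) (hφ₁ : 0 < φ) (hφ₂ : φ < Real.pi / 2)
    (hK : CHclass φ K)
    (hnormal : (ContinuousLinearMap.adjoint K).comp K = K.comp (ContinuousLinearMap.adjoint K))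
    (hspec : spectrum ℂ K ⊆
      {z : ℂ | ‖z‖ ≤ 1 ∧ (‖z * (Real.sin φ : ℂ) + Complex.I * (Real.cos φ : ℂ)‖ = 1 ∨
        ‖z * (Real.sin φ : ℂ) - Complex.I * (Real.cos φ : ℂ)‖ = 1)}) :
    ∀ K₁ K₂ : H →L[ℂ] H, CHclass φ K₁ → CHclass φ K₂ →
      ∀ t : ℝ, 0 < t → t < 1 →
        K = (t : ℂ) • K₁ + ((1 - t : ℝ) : ℂ) • K₂ → K₁ = K₂ := by
  intro K₁ K₂ hK₁ hK₂ t ht0 ht1 heq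
  haveI : IsStarNormal K := ⟨by rw [Commute, SemiconjBy, star_eq_adjoint]; exact hnormal⟩
  set s : ℝ := Real.sin φ with hs_def
  set c : ℝ := Real.cos φ with hc_def
  have hs : 0 < s := Real.sin_pos_of_pos_of_lt_pi hφ₁ (by linarith [Real.pi_pos])
  -- the shifted operators
  set A : H →L[ℂ] H := (s:ℂ) • K + (Complex.I * (c:ℂ)) • 1 with hA_def
  set B : H →L[ℂ] H := (s:ℂ) • K - (Complex.I * (c:ℂ)) • 1 with hB_def
  set A₁ : H →L[ℂ] H := (s:ℂ) • K₁ + (Complex.I * (c:ℂ)) • 1 with hA₁_def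
  set A₂ : H →L[ℂ] H := (s:ℂ) • K₂ + (Complex.I * (c:ℂ)) • 1 with hA₂_def
  set B₁ : H →L[ℂ] H := (s:ℂ) • K₁ - (Complex.I * (c:ℂ)) • 1 with hB₁_def
  set B₂ : H →L[ℂ] H := (s:ℂ) • K₂ - (Complex.I * (c:ℂ)) • 1 with hB₂_def
  set X : H →L[ℂ] H := K₁ - K₂ with hX_def
  set P : H →L[ℂ] H := 1 - star A * A with hP_def
  set Q : H →L[ℂ] H := 1 - star B * B with hQ_def
  -- cfc descriptions of A and B
  have hfA : A = cfc (fun z : ℂ => z * (s:ℂ) + Complex.I * (c:ℂ)) K := by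
    rw [cfc_affine' K ((s:ℂ)) (Complex.I * (c:ℂ))]
  have hfB : B = cfc (fun z : ℂ => z * (s:ℂ) - Complex.I * (c:ℂ)) K := by
    have : (fun z : ℂ => z * (s:ℂ) - Complex.I * (c:ℂ))
        = fun z : ℂ => z * (s:ℂ) + (-(Complex.I * (c:ℂ))) := by ext z; ring
    rw [this, cfc_affine' K ((s:ℂ)) (-(Complex.I * (c:ℂ))), neg_smul, ← sub_eq_add_neg]
  -- P and Q as cfc
  have hPc : P = cfc (fun z : ℂ =>
      1 - star (z * (s:ℂ) + Complex.I * (c:ℂ)) * (z * (s:ℂ) + Complex.I * (c:ℂ))) K := by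
    rw [hP_def, hfA, defect_cfc K _ (by fun_prop)]
  have hQc : Q = cfc (fun z : ℂ =>
      1 - star (z * (s:ℂ) - Complex.I * (c:ℂ)) * (z * (s:ℂ) - Complex.I * (c:ℂ))) K := by
    rw [hQ_def, hfB, defect_cfc K _ (by fun_prop)]
  -- the key spectral vanishing:  Q * P = 0
  have hQP : Q * P = 0 := by
    rw [hPc, hQc, ← cfc_mul _ _ K (by fun_prop) (by fun_prop)]
    have : cfc (fun z : ℂ =>
        (1 - star (z * (s:ℂ) - Complex.I * (c:ℂ)) * (z * (s:ℂ) - Complex.I * (c:ℂ))) *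
        (1 - star (z * (s:ℂ) + Complex.I * (c:ℂ)) * (z * (s:ℂ) + Complex.I * (c:ℂ)))) K
        = cfc (fun _ : ℂ => (0:ℂ)) K := by
      apply cfc_congr
      intro z hz
      rcases (hspec hz).2 with h | h
      · simp only [one_sub_star_mul_self _ h, mul_zero]
      · simp only [one_sub_star_mul_self _ h, zero_mul]
    rw [this]
    simp
  -- convexity inequality for contractions
  have hkey : ∀ (T T₁ T₂ : H →L[ℂ] H), ‖T₁‖ ≤ 1 → ‖T₂‖ ≤ 1 →
      T = (t:ℂ) • T₁ + ((1-t:ℝ):ℂ) • T₂ →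
      ∀ h : H, t*(1-t)*‖T₁ h - T₂ h‖^2 ≤ ‖h‖^2 - ‖T h‖^2 := by
    intro T T₁ T₂ h1 h2 hT h
    have hTh : T h = (t:ℂ) • (T₁ h) + ((1-t:ℝ):ℂ) • (T₂ h) := by rw [hT]; simp
    have hiden := convex_sq_norm (T₁ h) (T₂ h) t ht0.le ht1.le
    have e1 : ‖T₁ h‖ ≤ ‖h‖ := by
      simpa using T₁.le_of_opNorm_le h1 h
    have e2 : ‖T₂ h‖ ≤ ‖h‖ := by
      simpa using T₂.le_of_opNorm_le h2 h
    have e1' : ‖T₁ h‖^2 ≤ ‖h‖^2 := by nlinarith [norm_nonneg (T₁ h)]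
    have e2' : ‖T₂ h‖^2 ≤ ‖h‖^2 := by nlinarith [norm_nonneg (T₂ h)]
    rw [hTh, hiden]
    nlinarith [mul_nonneg ht0.le (sub_nonneg.2 e1'),
      mul_nonneg (by linarith : (0:ℝ) ≤ 1 - t) (sub_nonneg.2 e2')]
  -- the defect quadratic form
  have hdefect : ∀ (T : H →L[ℂ] H) (h : H),
      (⟪((1 - star T * T) : H →L[ℂ] H) h, h⟫_ℂ).re = ‖h‖^2 - ‖T h‖^2 := by
    intro T h
    have : ⟪((1 - star T * T) : H →L[ℂ] H) h, h⟫_ℂ = ⟪h, h⟫_ℂ - ⟪T h, T h⟫_ℂ := by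
      rw [sub_apply, inner_sub_left, ContinuousLinearMap.one_apply]
      rw [show ((star T * T) : H →L[ℂ] H) h = star T (T h) from rfl]
      rw [star_eq_adjoint, adjoint_inner_left]
    rw [this, Complex.sub_re]
    simp only [← RCLike.re_to_complex, inner_self_eq_norm_sq]
  -- convex decompositions of A and B
  have hAeq : A = (t:ℂ) • A₁ + ((1-t:ℝ):ℂ) • A₂ := by
    rw [hA_def, hA₁_def, hA₂_def, heq]; push_cast; module
  have hBeq : B = (t:ℂ) • B₁ + ((1-t:ℝ):ℂ) • B₂ := by
    rw [hB_def, hB₁_def, hB₂_def, heq]; push_cast; module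
  have hdA : A₁ - A₂ = (s:ℂ) • X := by
    rw [hA₁_def, hA₂_def, hX_def]; module
  have hdB : B₁ - B₂ = (s:ℂ) • X := by
    rw [hB₁_def, hB₂_def, hX_def]; module
  set c₀ : ℝ := t*(1-t)*s^2 with hc₀_def
  have hc₀ : 0 < c₀ := by
    have : (0:ℝ) < 1 - t := by linarith
    positivity
  have hnorm_dX : ∀ (h : H), ‖(s:ℂ) • (X h)‖^2 = s^2 * ‖X h‖^2 := by
    intro h
    rw [norm_smul, Complex.norm_real, Real.norm_eq_abs, _root_.abs_of_pos hs]
    ring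
  have hPineq : ∀ h : H, c₀ * ‖X h‖^2 ≤ (⟪P h, h⟫_ℂ).re := by
    intro h
    have h1 := hkey A A₁ A₂ hK₁.1 hK₂.1 hAeq h
    have h2 : A₁ h - A₂ h = (s:ℂ) • (X h) := by
      rw [← sub_apply, hdA]; rfl
    rw [h2, hnorm_dX] at h1
    rw [hP_def, hdefect A h]
    calc c₀ * ‖X h‖^2 = t*(1-t)*(s^2 * ‖X h‖^2) := by rw [hc₀_def]; ring
    _ ≤ ‖h‖^2 - ‖A h‖^2 := h1
  have hQineq : ∀ h : H, c₀ * ‖X h‖^2 ≤ (⟪Q h, h⟫_ℂ).re := by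
    intro h
    have h1 := hkey B B₁ B₂ hK₁.2 hK₂.2 hBeq h
    have h2 : B₁ h - B₂ h = (s:ℂ) • (X h) := by
      rw [← sub_apply, hdB]; rfl
    rw [h2, hnorm_dX] at h1
    rw [hQ_def, hdefect B h]
    calc c₀ * ‖X h‖^2 = t*(1-t)*(s^2 * ‖X h‖^2) := by rw [hc₀_def]; ring
    _ ≤ ‖h‖^2 - ‖B h‖^2 := h1
  -- step 1 : X * P = 0
  have hzero_of : ∀ (u v : H), c₀ * ‖u‖^2 ≤ (⟪(0:H), v⟫_ℂ).re → u = 0 := by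
    intro u v hle
    rw [inner_zero_left] at hle
    simp only [Complex.zero_re] at hle
    have h2 : ‖u‖^2 ≤ 0 := by nlinarith
    have h3 : ‖u‖^2 = 0 := le_antisymm h2 (sq_nonneg _)
    exact norm_eq_zero.mp (pow_eq_zero_iff two_ne_zero |>.mp h3)
  have hXP : X * P = 0 := by
    ext h
    have h1 := hQineq (P h)
    have h2 : Q (P h) = 0 := by
      rw [show Q (P h) = (Q * P) h from rfl, hQP]; rfl
    rw [h2] at h1
    exact hzero_of _ _ h1
  have hstarP : star P = P := by
    rw [hP_def]; simp [star_sub, star_mul, star_star]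
  have hPXs : P * star X = 0 := by
    calc P * star X = star P * star X := by rw [hstarP]
    _ = star (X * P) := (star_mul _ _).symm
    _ = 0 := by rw [hXP, star_zero]
  -- step 2 : X (X* X h) = 0
  have hXXX : ∀ h : H, X ((star X) (X h)) = 0 := by
    intro h
    have h1 := hPineq ((star X) (X h))
    have h2 : P ((star X) (X h)) = 0 := by
      rw [show P ((star X) (X h)) = (P * star X) (X h) from rfl, hPXs]; rfl
    rw [h2] at h1
    exact hzero_of _ _ h1
  -- step 3 : X* X h = 0
  have hXX : ∀ h : H, (star X) (X h) = 0 := by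
    intro h
    have : ⟪(star X) (X h), (star X) (X h)⟫_ℂ = 0 := by
      nth_rewrite 1 [star_eq_adjoint]
      rw [adjoint_inner_left]
      rw [show X ((star X) (X h)) = 0 from hXXX h, inner_zero_right]
    exact inner_self_eq_zero.mp this
  -- step 4 : X h = 0
  have hXz : ∀ h : H, X h = 0 := by
    intro h
    have : ⟪X h, X h⟫_ℂ = 0 := by
      rw [show (⟪X h, X h⟫_ℂ) = ⟪(star X) (X h), h⟫_ℂ by
        rw [star_eq_adjoint, adjoint_inner_left]]
      rw [hXX h, inner_zero_left]
    exact inner_self_eq_zero.mp this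
  ext h
  have := hXz h
  rw [hX_def, sub_apply, sub_eq_zero] at this
  exact this
end
end

section
/- Let H be a complex Hilbert space, φ ∈ (0, π/2), and K ∈ C_H(φ) with σ(K) ⊆ ∂L_φ, where ∂L_φ := {z ∈ ℂ : |z| ≤ 1 and (|z·sin φ + i·cos φ| = 1 or |z·sin φ − i·cos φ| = 1)}. If the spectrum of K is purely point, in the sense that the closed linear span of all eigenspaces of K equals H, then K is normal (K*K = KK*). -/
open ContinuousLinearMap Complex
open scoped InnerProductSpace

noncomputable section

/-- A contraction maps a unimodular eigenvector to the conjugate eigenvector of its adjoint. -/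
lemma adjoint_eigen_of_contraction {H : Type*} [NormedAddCommGroup H] [InnerProductSpace ℂ H]
    [CompleteSpace H] (A : H →L[ℂ] H) (hA : ‖A‖ ≤ 1) (μ : ℂ) (hμ : ‖μ‖ = 1) (x : H)
    (hx : A x = μ • x) :
    ContinuousLinearMap.adjoint A x = (starRingEnd ℂ) μ • x := by
  have hnorm : ‖ContinuousLinearMap.adjoint A x‖ ≤ ‖x‖ := by
    calc ‖ContinuousLinearMap.adjoint A x‖ ≤ ‖ContinuousLinearMap.adjoint A‖ * ‖x‖ :=
          le_opNorm _ _
      _ ≤ 1 * ‖x‖ := by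
          gcongr
          rw [LinearIsometryEquiv.norm_map]; exact hA
      _ = ‖x‖ := one_mul _
  have hinner : ⟪ContinuousLinearMap.adjoint A x, (starRingEnd ℂ) μ • x⟫_ℂ = (‖x‖ : ℂ) ^ 2 := by
    rw [inner_smul_right, ContinuousLinearMap.adjoint_inner_left, hx, inner_smul_right]
    rw [inner_self_eq_norm_sq_to_K]
    rw [← mul_assoc, mul_comm ((starRingEnd ℂ) μ) μ, Complex.mul_conj']
    rw [hμ]
    norm_num
  have key : ‖ContinuousLinearMap.adjoint A x - (starRingEnd ℂ) μ • x‖ ^ 2 ≤ 0 := by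
    rw [@norm_sub_sq ℂ]
    have h1 : RCLike.re (⟪ContinuousLinearMap.adjoint A x, (starRingEnd ℂ) μ • x⟫_ℂ)
        = ‖x‖ ^ 2 := by rw [hinner]; norm_cast
    have h2 : ‖(starRingEnd ℂ) μ • x‖ = ‖x‖ := by
      rw [norm_smul, RingHomIsometric.norm_map, hμ, one_mul]
    rw [h1, h2]
    nlinarith [norm_nonneg (ContinuousLinearMap.adjoint A x), norm_nonneg x]
  have : ‖ContinuousLinearMap.adjoint A x - (starRingEnd ℂ) μ • x‖ = 0 := by
    nlinarith [norm_nonneg (ContinuousLinearMap.adjoint A x - (starRingEnd ℂ) μ • x)]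
  rw [norm_eq_zero, sub_eq_zero] at this
  exact this


/-- Helper: if `s•K + c•1` is a contraction with `conj c = -c`, `K x = l • x` and
`‖l*s + c‖ = 1`, then `K* x = conj l • x`. -/
lemma adjoint_eigen_helper {H : Type*} [NormedAddCommGroup H] [InnerProductSpace ℂ H]
    [CompleteSpace H] (K : H →L[ℂ] H)
    (adjoint_eig : ∀ (A : H →L[ℂ] H), ‖A‖ ≤ 1 → ∀ (μ : ℂ), ‖μ‖ = 1 → ∀ x, A x = μ • x →
       ContinuousLinearMap.adjoint A x = (starRingEnd ℂ) μ • x)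
    (s : ℝ) (hs : (s : ℂ) ≠ 0) (c : ℂ) (hc : (starRingEnd ℂ) c = -c)
    (hA : ‖(s : ℂ) • K + c • (1 : H →L[ℂ] H)‖ ≤ 1)
    (l : ℂ) (x : H) (hx : K x = l • x) (hμ : ‖l * (s : ℂ) + c‖ = 1) :
    ContinuousLinearMap.adjoint K x = (starRingEnd ℂ) l • x := by
  set A : H →L[ℂ] H := (s : ℂ) • K + c • (1 : H →L[ℂ] H) with hAdef
  have hAx : A x = (l * (s : ℂ) + c) • x := by
    simp only [hAdef, ContinuousLinearMap.add_apply, ContinuousLinearMap.smul_apply,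
      ContinuousLinearMap.one_apply, hx, smul_smul, add_smul]
    ring_nf
  have hadj := adjoint_eig A hA _ hμ x hAx
  have hAadj : ContinuousLinearMap.adjoint A
      = (s : ℂ) • ContinuousLinearMap.adjoint K - c • (1 : H →L[ℂ] H) := by
    rw [hAdef, map_add, map_smulₛₗ, map_smulₛₗ, hc]
    have h1 : ContinuousLinearMap.adjoint (1 : H →L[ℂ] H) = 1 := by
      ext v
      refine ext_inner_left ℂ fun w => ?_
      rw [ContinuousLinearMap.adjoint_inner_right]
      simp
    rw [h1]
    simp [Complex.conj_ofReal, sub_eq_add_neg, neg_smul]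
  rw [hAadj] at hadj
  simp only [ContinuousLinearMap.sub_apply, ContinuousLinearMap.smul_apply,
    ContinuousLinearMap.one_apply, map_add, map_mul, Complex.conj_ofReal, hc] at hadj
  have h2 : (s : ℂ) • ContinuousLinearMap.adjoint K x
      = ((starRingEnd ℂ) l * (s : ℂ)) • x := by
    have := hadj
    rw [sub_eq_iff_eq_add] at this
    rw [this, add_smul, neg_smul]
    abel
  have h3 : (s : ℂ) • ContinuousLinearMap.adjoint K x
      = (s : ℂ) • ((starRingEnd ℂ) l • x) := by
    rw [h2, smul_smul, mul_comm]
  exact smul_right_injective H hs h3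


theorem statement12 {H : Type*} [NormedAddCommGroup H] [InnerProductSpace ℂ H] [CompleteSpace H]
    (K : H →L[ℂ] H) (φ : ℝ) (hφ₁ : 0 < φ) (hφ₂ : φ < Real.pi / 2)
    (hK : CHclass φ K)
    (hspec : spectrum ℂ K ⊆
      {z : ℂ | ‖z‖ ≤ 1 ∧ (‖z * (Real.sin φ : ℂ) + Complex.I * (Real.cos φ : ℂ)‖ = 1 ∨
        ‖z * (Real.sin φ : ℂ) - Complex.I * (Real.cos φ : ℂ)‖ = 1)})
    (hpp : (⨆ μ : ℂ, LinearMap.ker ((K - μ • (1 : H →L[ℂ] H) : H →L[ℂ] H) : H →ₗ[ℂ] H)).topologicalClosure = ⊤) :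
    (ContinuousLinearMap.adjoint K).comp K = K.comp (ContinuousLinearMap.adjoint K) := by
  have hsin : (0 : ℝ) < Real.sin φ :=
    Real.sin_pos_of_pos_of_lt_pi hφ₁ (by linarith [Real.pi_pos])
  have hsne : ((Real.sin φ : ℝ) : ℂ) ≠ 0 := by exact_mod_cast hsin.ne'
  set D : H →L[ℂ] H :=
    (ContinuousLinearMap.adjoint K).comp K - K.comp (ContinuousLinearMap.adjoint K) with hDdef
  have hker : ∀ μ : ℂ, LinearMap.ker ((K - μ • (1 : H →L[ℂ] H) : H →L[ℂ] H) : H →ₗ[ℂ] H) ≤ LinearMap.ker (D : H →ₗ[ℂ] H) := by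
    intro μ x hx
    rw [LinearMap.mem_ker] at hx ⊢
    have hKx : K x = μ • x := by
      have : K x - μ • x = 0 := by
        simpa [ContinuousLinearMap.sub_apply, ContinuousLinearMap.smul_apply,
          ContinuousLinearMap.one_apply] using hx
      rwa [sub_eq_zero] at this
    by_cases hx0 : x = 0
    · simp [hx0]
    have hmem : μ ∈ spectrum ℂ K := by
      rw [spectrum.mem_iff]
      intro hu
      apply hx0
      have h0 : (algebraMap ℂ (H →L[ℂ] H) μ - K) x = 0 := by
        simp [Algebra.algebraMap_eq_smul_one, ContinuousLinearMap.sub_apply,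
          ContinuousLinearMap.smul_apply, ContinuousLinearMap.one_apply, hKx]
      calc x = ((↑hu.unit⁻¹ * ↑hu.unit : H →L[ℂ] H)) x := by rw [hu.unit.inv_mul]; rfl
        _ = (↑hu.unit⁻¹ : H →L[ℂ] H) ((algebraMap ℂ (H →L[ℂ] H) μ - K) x) := by
            rw [hu.unit_spec]; rfl
        _ = 0 := by rw [h0, map_zero]
    obtain ⟨-, hcase⟩ := hspec hmem
    have hadj : ContinuousLinearMap.adjoint K x = (starRingEnd ℂ) μ • x := by
      rcases hcase with h1 | h2
      · refine adjoint_eigen_helper K (fun A hA μ' hμ' y hy =>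
          adjoint_eigen_of_contraction A hA μ' hμ' y hy) (Real.sin φ) hsne
          (Complex.I * (Real.cos φ : ℂ)) ?_ hK.1 μ x hKx h1
        rw [map_mul, Complex.conj_I, Complex.conj_ofReal]; ring
      · refine adjoint_eigen_helper K (fun A hA μ' hμ' y hy =>
          adjoint_eigen_of_contraction A hA μ' hμ' y hy) (Real.sin φ) hsne
          (-(Complex.I * (Real.cos φ : ℂ))) ?_ ?_ μ x hKx ?_
        · rw [map_neg, map_mul, Complex.conj_I, Complex.conj_ofReal]; ring
        · have := hK.2
          rwa [sub_eq_add_neg, ← neg_smul] at this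
        · rwa [← sub_eq_add_neg]
    show D x = 0
    rw [hDdef]
    simp only [ContinuousLinearMap.sub_apply, ContinuousLinearMap.comp_apply, hKx, hadj,
      map_smul, hKx, hadj, smul_smul]
    rw [mul_comm, sub_self]
  have hsup : (⨆ μ : ℂ, LinearMap.ker ((K - μ • (1 : H →L[ℂ] H) : H →L[ℂ] H) : H →ₗ[ℂ] H)) ≤ LinearMap.ker (D : H →ₗ[ℂ] H) :=
    iSup_le hker
  have htop : (⊤ : Submodule ℂ H) ≤ LinearMap.ker (D : H →ₗ[ℂ] H) := by
    rw [← hpp]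
    exact Submodule.topologicalClosure_minimal _ hsup (ContinuousLinearMap.isClosed_ker D)
  ext x
  have hx : D x = 0 := by
    have := htop (Submodule.mem_top : x ∈ (⊤ : Submodule ℂ H))
    rwa [LinearMap.mem_ker] at this
  rw [hDdef, ContinuousLinearMap.sub_apply, sub_eq_zero] at hx
  exact hx
end
end

section
/- Let φ ∈ (0, π/2) and H = ℂ². For θ ∈ ℝ let K(θ) ∈ B(ℂ²) be the operator with matrix e^{iθ}·[[0, sin φ],[0, 0]]. Then each K(θ) belongs to C_H(φ), is not normal (K(θ)*K(θ) ≠ K(θ)K(θ)*), has spectrum σ(K(θ)) = {0}, and is an extreme point of the convex set C_H(φ). In particular, the operators K(θ) for θ ∈ [0, 2π) are pairwise distinct, so the set of extreme points of C_{ℂ²}(φ) contains a continuum of non-normal operators. -/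
open ContinuousLinearMap Complex
open scoped InnerProductSpace

noncomputable section

/-- The operator on `ℂ²` with matrix `e^{iθ}·[[0, sin φ], [0, 0]]`. -/
def Kop (φ θ : ℝ) : EuclideanSpace ℂ (Fin 2) →L[ℂ] EuclideanSpace ℂ (Fin 2) :=
  Matrix.toEuclideanCLM (𝕜 := ℂ)
    !![0, Complex.exp (Complex.I * (θ : ℂ)) * (Real.sin φ : ℂ); 0, 0]

/- ### Auxiliary machinery -/

/-- vectors in `ℂ²` -/
def vec2 (a b : ℂ) : EuclideanSpace ℂ (Fin 2) := (WithLp.equiv 2 _).symm ![a, b]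

@[simp] lemma vec2_zero (a b : ℂ) : vec2 a b 0 = a := rfl
@[simp] lemma vec2_one (a b : ℂ) : vec2 a b 1 = b := rfl

lemma norm_sq_eq (x : EuclideanSpace ℂ (Fin 2)) : ‖x‖^2 = ‖x 0‖^2 + ‖x 1‖^2 := by
  rw [EuclideanSpace.norm_eq, Real.sq_sqrt (by positivity)]
  simp [Fin.sum_univ_two]

lemma clm_apply_mat (M : Matrix (Fin 2) (Fin 2) ℂ) (x : EuclideanSpace ℂ (Fin 2)) (i : Fin 2) :
    Matrix.toEuclideanCLM (𝕜 := ℂ) M x i = M i 0 * x 0 + M i 1 * x 1 := by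
  have h := Matrix.ofLp_toEuclideanCLM (𝕜 := ℂ) M x
  have h2 : Matrix.toEuclideanCLM (𝕜 := ℂ) M x i = Matrix.toLin' M (WithLp.equiv _ _ x) i := by
    exact congrFun h i
  rw [h2]
  simp [Matrix.toLin'_apply, Matrix.mulVec, dotProduct, Fin.sum_univ_two]

lemma Kop_apply₀ (φ θ : ℝ) (x : EuclideanSpace ℂ (Fin 2)) :
    Kop φ θ x 0 = Complex.exp (Complex.I * (θ : ℂ)) * (Real.sin φ : ℂ) * x 1 := by
  rw [Kop, clm_apply_mat]; simp

lemma Kop_apply₁ (φ θ : ℝ) (x : EuclideanSpace ℂ (Fin 2)) : Kop φ θ x 1 = 0 := by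
  rw [Kop, clm_apply_mat]; simp

lemma norm_exp_I_theta (θ : ℝ) : ‖Complex.exp (Complex.I * (θ : ℂ))‖ = 1 := by
  rw [Complex.norm_exp]
  simp

lemma norm_aux (φ θ : ℝ) (hφ₁ : 0 < φ) (hφ₂ : φ < Real.pi / 2) (ε : ℂ) (hε : ‖ε‖ = 1) :
    ‖(Real.sin φ : ℂ) • Kop φ θ + (ε * (Real.cos φ : ℂ)) • 1‖ ≤ 1 := by
  set s := Real.sin φ with hs
  set c := Real.cos φ with hc
  have hs0 : 0 < s := Real.sin_pos_of_pos_of_lt_pi hφ₁ (by linarith [Real.pi_pos])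
  have hc0 : 0 < c := Real.cos_pos_of_mem_Ioo ⟨by linarith [Real.pi_pos], hφ₂⟩
  have hsc : s ^ 2 + c ^ 2 = 1 := by rw [hs, hc]; exact Real.sin_sq_add_cos_sq φ
  apply ContinuousLinearMap.opNorm_le_bound _ zero_le_one
  intro x
  rw [one_mul]
  set T := (s : ℂ) • Kop φ θ + (ε * (c : ℂ)) • (1 : EuclideanSpace ℂ (Fin 2) →L[ℂ] _)
  have h0 : T x 0 = ε * c * x 0 + Complex.exp (Complex.I * (θ : ℂ)) * (s : ℂ)^2 * x 1 := by
    simp only [T, ContinuousLinearMap.add_apply, ContinuousLinearMap.coe_smul',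
      Pi.smul_apply, ContinuousLinearMap.one_apply, PiLp.add_apply, PiLp.smul_apply,
      smul_eq_mul, Kop_apply₀]
    ring
  have h1 : T x 1 = ε * c * x 1 := by
    simp only [T, ContinuousLinearMap.add_apply, ContinuousLinearMap.coe_smul',
      Pi.smul_apply, ContinuousLinearMap.one_apply, PiLp.add_apply, PiLp.smul_apply,
      smul_eq_mul, Kop_apply₁]
    ring
  have hx : ‖T x‖^2 ≤ ‖x‖^2 := by
    rw [norm_sq_eq, norm_sq_eq, h0, h1]
    have hb0 : ‖ε * ↑c * x 0 + Complex.exp (Complex.I * (θ : ℂ)) * (s:ℂ)^2 * x 1‖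
        ≤ c * ‖x 0‖ + s^2 * ‖x 1‖ := by
      refine le_trans (norm_add_le _ _) ?_
      rw [norm_mul, norm_mul, norm_mul, norm_mul, hε, norm_exp_I_theta]
      simp [Complex.norm_real, abs_of_pos hc0, abs_of_pos hs0, sq_abs]
    have hb1 : ‖ε * ↑c * x 1‖ = c * ‖x 1‖ := by
      rw [norm_mul, norm_mul, hε]
      simp [abs_of_pos hc0]
    rw [hb1]
    have hb2 := pow_le_pow_left₀ (norm_nonneg _) hb0 2
    set a := ‖x 0‖
    set b := ‖x 1‖
    have key : a^2 + b^2 - ((c*a + s^2*b)^2 + (c*b)^2)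
        = s^2*(a - c*b)^2 + (s^2 + c^2 - 1)*(-(a^2) - (1 + s^2)*b^2) := by ring
    have ht : s ^ 2 + c ^ 2 - 1 = 0 := by linarith
    rw [ht, zero_mul, add_zero] at key
    nlinarith [mul_nonneg (sq_nonneg s) (sq_nonneg (a - c*b))]
  nlinarith [norm_nonneg (T x), norm_nonneg x]

lemma strict_conv {E : Type*} [NormedAddCommGroup E] [InnerProductSpace ℂ E]
    {u v : E} {r t : ℝ} (hu : ‖u‖ ≤ r) (hv : ‖v‖ ≤ r) (ht0 : 0 < t) (ht1 : t < 1)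
    (h : ‖(t : ℂ) • u + ((1 - t : ℝ) : ℂ) • v‖ = r) : u = v := by
  have h1t : 0 < 1 - t := by linarith
  have hp : 0 ≤ ‖u‖ := norm_nonneg u
  have hq : 0 ≤ ‖v‖ := norm_nonneg v
  have hr : 0 ≤ r := le_trans hp hu
  have key : ‖(t : ℂ) • u + ((1 - t : ℝ) : ℂ) • v‖ ^ 2
      = t ^ 2 * ‖u‖ ^ 2 + 2 * (t * (1 - t)) * (Complex.re ⟪u, v⟫_ℂ) + (1 - t) ^ 2 * ‖v‖ ^ 2 := by
    rw [norm_add_sq (𝕜 := ℂ), inner_smul_left, inner_smul_right, norm_smul, norm_smul]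
    simp only [Complex.norm_real, Complex.norm_ofNat, RCLike.star_def, Complex.conj_ofReal,
      Real.norm_eq_abs]
    have hre : RCLike.re ((((t * (1 - t)) : ℝ) : ℂ) * ⟪u, v⟫_ℂ)
        = (t * (1 - t)) * Complex.re ⟪u, v⟫_ℂ := Complex.re_ofReal_mul _ _
    rw [← mul_assoc, ← Complex.ofReal_mul, hre, abs_of_pos ht0, abs_of_pos h1t]
    ring
  have hip : Complex.re ⟪u, v⟫_ℂ ≤ ‖u‖ * ‖v‖ := re_inner_le_norm (𝕜 := ℂ) u v
  have h2 : ‖u - v‖ ^ 2 = ‖u‖ ^ 2 - 2 * Complex.re ⟪u, v⟫_ℂ + ‖v‖ ^ 2 :=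
    norm_sub_sq (𝕜 := ℂ) u v
  rw [h] at key
  have hz : ‖u - v‖ ^ 2 ≤ 0 := by
    rw [h2]
    nlinarith [mul_pos ht0 h1t, sq_nonneg (‖u‖ - ‖v‖),
      mul_nonneg (mul_nonneg ht0.le (sub_nonneg.2 hu)) (sub_nonneg.2 hv),
      mul_nonneg (mul_nonneg h1t.le (sub_nonneg.2 hu)) (sub_nonneg.2 hv),
      mul_nonneg ht0.le (sub_nonneg.2 hu), mul_nonneg h1t.le (sub_nonneg.2 hv),
      sq_nonneg (t * ‖u‖ + (1 - t) * ‖v‖ - r)]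
  have hnz : ‖u - v‖ = 0 := by nlinarith [norm_nonneg (u - v)]
  rwa [norm_eq_zero, sub_eq_zero] at hnz

set_option maxHeartbeats 2000000 in
set_option synthInstance.maxHeartbeats 200000 in
theorem statement13 (φ : ℝ) (hφ₁ : 0 < φ) (hφ₂ : φ < Real.pi / 2) :
    (∀ θ : ℝ,
      CHclass φ (Kop φ θ) ∧
      (ContinuousLinearMap.adjoint (Kop φ θ)).comp (Kop φ θ) ≠
        (Kop φ θ).comp (ContinuousLinearMap.adjoint (Kop φ θ)) ∧
      spectrum ℂ (Kop φ θ) = {0} ∧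
      (∀ K₁ K₂ : EuclideanSpace ℂ (Fin 2) →L[ℂ] EuclideanSpace ℂ (Fin 2),
        CHclass φ K₁ → CHclass φ K₂ → ∀ t : ℝ, 0 < t → t < 1 →
          Kop φ θ = (t : ℂ) • K₁ + ((1 - t : ℝ) : ℂ) • K₂ → K₁ = K₂)) ∧
    (∀ θ₁ ∈ Set.Ico (0 : ℝ) (2 * Real.pi), ∀ θ₂ ∈ Set.Ico (0 : ℝ) (2 * Real.pi),
      Kop φ θ₁ = Kop φ θ₂ → θ₁ = θ₂) := by
  have hs0 : 0 < Real.sin φ := Real.sin_pos_of_pos_of_lt_pi hφ₁ (by linarith [Real.pi_pos])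
  have hc0 : 0 < Real.cos φ := Real.cos_pos_of_mem_Ioo ⟨by linarith [Real.pi_pos], hφ₂⟩
  have hsc : Real.sin φ ^ 2 + Real.cos φ ^ 2 = 1 := Real.sin_sq_add_cos_sq φ
  set s := Real.sin φ with hsdef
  set c := Real.cos φ with hcdef
  have hsC : (s : ℂ) ≠ 0 := by exact_mod_cast hs0.ne'
  have hcC : (c : ℂ) ≠ 0 := by exact_mod_cast hc0.ne'
  have hscC : (s : ℂ)^2 + (c : ℂ)^2 = 1 := by exact_mod_cast hsc
  constructor
  · intro θ
    set e := Complex.exp (Complex.I * (θ : ℂ)) with hedef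
    have he : ‖e‖ = 1 := norm_exp_I_theta θ
    have heC : e ≠ 0 := Complex.exp_ne_zero _
    refine ⟨⟨norm_aux φ θ hφ₁ hφ₂ Complex.I (by simp), ?_⟩, ?_, ?_, ?_⟩
    · -- second CHclass bound
      have := norm_aux φ θ hφ₁ hφ₂ (-Complex.I) (by simp)
      have heq2 : (s : ℂ) • Kop φ θ - (Complex.I * (c : ℂ)) • 1
          = (s : ℂ) • Kop φ θ + (-Complex.I * (c : ℂ)) • 1 := by
        module
      rwa [heq2]
    · -- non-normal
      intro h
      set u : EuclideanSpace ℂ (Fin 2) := vec2 0 1 with hu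
      have happ := congrArg (fun T : EuclideanSpace ℂ (Fin 2) →L[ℂ] EuclideanSpace ℂ (Fin 2)
        => T u) h
      simp only [ContinuousLinearMap.comp_apply] at happ
      have hlhs : ⟪u, (ContinuousLinearMap.adjoint (Kop φ θ)) (Kop φ θ u)⟫_ℂ
          = ⟪Kop φ θ u, Kop φ θ u⟫_ℂ :=
        ContinuousLinearMap.adjoint_inner_right (Kop φ θ) u (Kop φ θ u)
      have hrhs : ⟪u, Kop φ θ ((ContinuousLinearMap.adjoint (Kop φ θ)) u)⟫_ℂ = 0 := by
        rw [PiLp.inner_apply, Fin.sum_univ_two]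
        simp [hu, Kop_apply₁]
      have hu1 : u 1 = 1 := rfl
      have hKu0 : Kop φ θ u 0 = e * (s : ℂ) := by
        rw [Kop_apply₀, hu1, mul_one]
      have hKu1 : Kop φ θ u 1 = 0 := Kop_apply₁ φ θ u
      have hval : ⟪Kop φ θ u, Kop φ θ u⟫_ℂ = starRingEnd ℂ (e * (s : ℂ)) * (e * (s : ℂ)) := by
        rw [PiLp.inner_apply, Fin.sum_univ_two, hKu0, hKu1]
        simp [RCLike.inner_apply]
        rw [mul_mul_mul_comm, Complex.conj_mul', he, abs_of_pos hs0]
        push_cast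
        ring
      have hzero : starRingEnd ℂ (e * (s : ℂ)) * (e * (s : ℂ)) = 0 := by
        rw [← hval, ← hlhs, happ, hrhs]
      have hes : e * (s : ℂ) ≠ 0 := mul_ne_zero heC hsC
      rcases mul_eq_zero.mp hzero with h' | h'
      · exact hes (by simpa using h')
      · exact hes h'
    · -- spectrum
      have hk2 : (Kop φ θ) ^ 2 = 0 := by
        rw [sq]
        ext z i
        simp only [ContinuousLinearMap.mul_apply, ContinuousLinearMap.zero_apply]
        fin_cases i
        · show Kop φ θ (Kop φ θ z) 0 = (0 : EuclideanSpace ℂ (Fin 2)) 0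
          rw [Kop_apply₀, Kop_apply₁, mul_zero]; rfl
        · show Kop φ θ (Kop φ θ z) 1 = (0 : EuclideanSpace ℂ (Fin 2)) 1
          rw [Kop_apply₁]; rfl
      have hne := spectrum.nonempty (Kop φ θ)
      have hmapped := spectrum.map_pow_of_pos (𝕜 := ℂ) (Kop φ θ) (n := 2) (by norm_num)
      rw [hk2, spectrum.zero_eq] at hmapped
      have hsub : spectrum ℂ (Kop φ θ) ⊆ {0} := by
        intro z hz
        have : z ^ 2 ∈ ({0} : Set ℂ) := hmapped ▸ Set.mem_image_of_mem _ hz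
        simpa [pow_eq_zero_iff] using this
      obtain ⟨z, hz⟩ := hne
      have hz0 : z = 0 := hsub hz
      exact Set.eq_singleton_iff_unique_mem.mpr ⟨hz0 ▸ hz, fun y hy => hsub hy⟩
    · -- extreme point
      intro K₁ K₂ hK1 hK2 t ht0 ht1 heq
      set g : ℂ := Complex.I * c * e with hgdef
      have hg : g ≠ 0 := by
        simp only [hgdef]
        exact mul_ne_zero (mul_ne_zero Complex.I_ne_zero hcC) heC
      set xv := vec2 (-g) 1 with hxvdef
      set yv := vec2 g 1 with hyvdef
      have hnormg : ‖g‖ = c := by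
        rw [hgdef, norm_mul, norm_mul, he, Complex.norm_I]
        simp [abs_of_pos hc0]
      -- generic computation of (s•K' + ε•1) applied to vec2 p 1 when K' = Kop
      have happly : ∀ (ε : ℂ) (p : ℂ),
          ((s : ℂ) • Kop φ θ + (ε * (c:ℂ)) • 1) (vec2 p 1) = vec2 (ε * c * p + e * s^2) (ε * c) := by
        intro ε p
        have h0 : ((s : ℂ) • Kop φ θ + (ε * (c:ℂ)) • 1) (vec2 p 1) 0 = ε * c * p + e * s^2 := by
          simp only [ContinuousLinearMap.add_apply, ContinuousLinearMap.coe_smul',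
            Pi.smul_apply, ContinuousLinearMap.one_apply, PiLp.add_apply, PiLp.smul_apply,
            smul_eq_mul, Kop_apply₀, vec2_zero, vec2_one, ← hedef]
          ring
        have h1 : ((s : ℂ) • Kop φ θ + (ε * (c:ℂ)) • 1) (vec2 p 1) 1 = ε * c := by
          simp only [ContinuousLinearMap.add_apply, ContinuousLinearMap.coe_smul',
            Pi.smul_apply, ContinuousLinearMap.one_apply, PiLp.add_apply, PiLp.smul_apply,
            smul_eq_mul, Kop_apply₁, vec2_one]
          ring
        ext i
        fin_cases i
        · exact h0
        · exact h1
      -- norms of xv and yv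
      have hnormxv : ‖xv‖^2 = c^2 + 1 := by
        rw [norm_sq_eq]
        simp [hxvdef, hnormg]
      have hnormyv : ‖yv‖^2 = c^2 + 1 := by
        rw [norm_sq_eq]
        simp [hyvdef, hnormg]
      -- the two "maximizing vector" computations
      have hAx : ((s : ℂ) • Kop φ θ + (Complex.I * (c:ℂ)) • 1) xv = vec2 e (Complex.I * c) := by
        rw [hxvdef, happly]
        have harg : Complex.I * (c : ℂ) * (-g) + e * (s : ℂ)^2 = e := by
          rw [hgdef]
          linear_combination e * hscC + (-(c:ℂ)^2 * e) * Complex.I_mul_I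
        rw [harg]
      have hBy : ((s : ℂ) • Kop φ θ + (-Complex.I * (c:ℂ)) • 1) yv
          = vec2 e (-Complex.I * c) := by
        rw [hyvdef, happly]
        have harg : -Complex.I * (c : ℂ) * g + e * (s : ℂ)^2 = e := by
          rw [hgdef]
          linear_combination e * hscC + (-(c:ℂ)^2 * e) * Complex.I_mul_I
        rw [harg]
      have hnormAx : ‖((s : ℂ) • Kop φ θ + (Complex.I * (c:ℂ)) • 1) xv‖ = ‖xv‖ := by
        have h2 : ‖((s : ℂ) • Kop φ θ + (Complex.I * (c:ℂ)) • 1) xv‖^2 = ‖xv‖^2 := by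
          rw [hAx, norm_sq_eq, hnormxv]
          have hic : ‖Complex.I * (c:ℂ)‖ = c := by
            rw [norm_mul, Complex.norm_I]
            simp [abs_of_pos hc0]
          simp [he, hic]
          ring
        rw [← Real.sqrt_sq (norm_nonneg _), h2, Real.sqrt_sq (norm_nonneg _)]
      have hnormBy : ‖((s : ℂ) • Kop φ θ + (-Complex.I * (c:ℂ)) • 1) yv‖ = ‖yv‖ := by
        have h2 : ‖((s : ℂ) • Kop φ θ + (-Complex.I * (c:ℂ)) • 1) yv‖^2 = ‖yv‖^2 := by
          rw [hBy, norm_sq_eq, hnormyv]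
          have hic : ‖-Complex.I * (c:ℂ)‖ = c := by
            rw [norm_mul, norm_neg, Complex.norm_I]
            simp [abs_of_pos hc0]
          simp [he, hic]
          ring
        rw [← Real.sqrt_sq (norm_nonneg _), h2, Real.sqrt_sq (norm_nonneg _)]
      -- combination identities
      have hcombA : (t : ℂ) • ((s : ℂ) • K₁ + (Complex.I * (c:ℂ)) • 1)
          + ((1 - t : ℝ) : ℂ) • ((s : ℂ) • K₂ + (Complex.I * (c:ℂ)) • 1)
          = (s : ℂ) • Kop φ θ + (Complex.I * (c:ℂ)) • 1 := by
        rw [heq]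
        push_cast
        module
      have hcombB : (t : ℂ) • ((s : ℂ) • K₁ + (-Complex.I * (c:ℂ)) • 1)
          + ((1 - t : ℝ) : ℂ) • ((s : ℂ) • K₂ + (-Complex.I * (c:ℂ)) • 1)
          = (s : ℂ) • Kop φ θ + (-Complex.I * (c:ℂ)) • 1 := by
        rw [heq]
        push_cast
        module
      -- bound lemmas from CHclass
      have hb1 : ∀ z : EuclideanSpace ℂ (Fin 2),
          ‖((s : ℂ) • K₁ + (Complex.I * (c:ℂ)) • 1) z‖ ≤ ‖z‖ := by
        intro z
        calc ‖((s : ℂ) • K₁ + (Complex.I * (c:ℂ)) • 1) z‖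
            ≤ ‖(s : ℂ) • K₁ + (Complex.I * (c:ℂ)) • 1‖ * ‖z‖ := le_opNorm _ _
          _ ≤ 1 * ‖z‖ := by gcongr; exact hK1.1
          _ = ‖z‖ := one_mul _
      have hb2 : ∀ z : EuclideanSpace ℂ (Fin 2),
          ‖((s : ℂ) • K₂ + (Complex.I * (c:ℂ)) • 1) z‖ ≤ ‖z‖ := by
        intro z
        calc ‖((s : ℂ) • K₂ + (Complex.I * (c:ℂ)) • 1) z‖
            ≤ ‖(s : ℂ) • K₂ + (Complex.I * (c:ℂ)) • 1‖ * ‖z‖ := le_opNorm _ _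
          _ ≤ 1 * ‖z‖ := by gcongr; exact hK2.1
          _ = ‖z‖ := one_mul _
      have hsub1 : (s : ℂ) • K₁ - (Complex.I * (c:ℂ)) • 1
          = (s : ℂ) • K₁ + (-Complex.I * (c:ℂ)) • 1 := by
        module
      have hsub2 : (s : ℂ) • K₂ - (Complex.I * (c:ℂ)) • 1
          = (s : ℂ) • K₂ + (-Complex.I * (c:ℂ)) • 1 := by
        module
      have hb1' : ∀ z : EuclideanSpace ℂ (Fin 2),
          ‖((s : ℂ) • K₁ + (-Complex.I * (c:ℂ)) • 1) z‖ ≤ ‖z‖ := by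
        intro z
        calc ‖((s : ℂ) • K₁ + (-Complex.I * (c:ℂ)) • 1) z‖
            ≤ ‖(s : ℂ) • K₁ + (-Complex.I * (c:ℂ)) • 1‖ * ‖z‖ := le_opNorm _ _
          _ ≤ 1 * ‖z‖ := by gcongr; rw [← hsub1]; exact hK1.2
          _ = ‖z‖ := one_mul _
      have hb2' : ∀ z : EuclideanSpace ℂ (Fin 2),
          ‖((s : ℂ) • K₂ + (-Complex.I * (c:ℂ)) • 1) z‖ ≤ ‖z‖ := by
        intro z
        calc ‖((s : ℂ) • K₂ + (-Complex.I * (c:ℂ)) • 1) z‖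
            ≤ ‖(s : ℂ) • K₂ + (-Complex.I * (c:ℂ)) • 1‖ * ‖z‖ := le_opNorm _ _
          _ ≤ 1 * ‖z‖ := by gcongr; rw [← hsub2]; exact hK2.2
          _ = ‖z‖ := one_mul _
      -- A₁ xv = A₂ xv
      have hAveq : ((s : ℂ) • K₁ + (Complex.I * (c:ℂ)) • 1) xv
          = ((s : ℂ) • K₂ + (Complex.I * (c:ℂ)) • 1) xv := by
        apply strict_conv (r := ‖xv‖) (hb1 xv) (hb2 xv) ht0 ht1
        rw [← ContinuousLinearMap.smul_apply, ← ContinuousLinearMap.smul_apply,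
          ← ContinuousLinearMap.add_apply, hcombA]
        exact hnormAx
      have hByeq : ((s : ℂ) • K₁ + (-Complex.I * (c:ℂ)) • 1) yv
          = ((s : ℂ) • K₂ + (-Complex.I * (c:ℂ)) • 1) yv := by
        apply strict_conv (r := ‖yv‖) (hb1' yv) (hb2' yv) ht0 ht1
        rw [← ContinuousLinearMap.smul_apply, ← ContinuousLinearMap.smul_apply,
          ← ContinuousLinearMap.add_apply, hcombB]
        exact hnormBy
      -- deduce K₁ xv = K₂ xv, K₁ yv = K₂ yv
      have hKx : K₁ xv = K₂ xv := by
        have h' : (s : ℂ) • K₁ xv = (s : ℂ) • K₂ xv := by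
          have := hAveq
          simp only [ContinuousLinearMap.add_apply, ContinuousLinearMap.coe_smul',
            Pi.smul_apply, ContinuousLinearMap.one_apply] at this
          exact add_right_cancel this
        exact smul_right_injective _ hsC h'
      have hKy : K₁ yv = K₂ yv := by
        have h' : (s : ℂ) • K₁ yv = (s : ℂ) • K₂ yv := by
          have := hByeq
          simp only [ContinuousLinearMap.add_apply, ContinuousLinearMap.coe_smul',
            Pi.smul_apply, ContinuousLinearMap.one_apply] at this
          exact add_right_cancel this
        exact smul_right_injective _ hsC h'
      -- K₁ = K₂ since xv, yv span ℂ²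
      ext z
      have hz : z = ((z 1 - z 0 / g)/2) • xv + ((z 1 + z 0 / g)/2) • yv := by
        ext i
        fin_cases i
        · show z 0 = (((z 1 - z 0 / g)/2) • xv + ((z 1 + z 0 / g)/2) • yv) 0
          simp only [PiLp.add_apply, PiLp.smul_apply, hxvdef, hyvdef, vec2_zero,
            smul_eq_mul]
          field_simp
          ring
        · show z 1 = (((z 1 - z 0 / g)/2) • xv + ((z 1 + z 0 / g)/2) • yv) 1
          simp only [PiLp.add_apply, PiLp.smul_apply, hxvdef, hyvdef, vec2_one,
            smul_eq_mul]
          ring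
      rw [hz, map_add, map_add, map_smul, map_smul, map_smul, map_smul, hKx, hKy]
  · -- injectivity
    intro θ₁ h₁ θ₂ h₂ heq
    have happ := congrArg (fun T : EuclideanSpace ℂ (Fin 2) →L[ℂ] EuclideanSpace ℂ (Fin 2)
      => T (vec2 0 1) 0) heq
    simp only [Kop_apply₀, vec2_one, mul_one] at happ
    have hexp : Complex.exp (Complex.I * (θ₁ : ℂ)) = Complex.exp (Complex.I * (θ₂ : ℂ)) :=
      mul_right_cancel₀ hsC happ
    obtain ⟨n, hn⟩ := Complex.exp_eq_exp_iff_exists_int.mp hexp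
    have him := congrArg Complex.im hn
    simp [Complex.mul_im, Complex.mul_re] at him
    -- him : θ₁ = θ₂ + n * (2π)
    have hn0 : n = 0 := by
      have hb₁ : 0 ≤ θ₁ := h₁.1
      have hb₂ : θ₁ < 2 * Real.pi := h₁.2
      have hb₃ : 0 ≤ θ₂ := h₂.1
      have hb₄ : θ₂ < 2 * Real.pi := h₂.2
      have hpi := Real.pi_pos
      have hlt : (n : ℝ) < 1 := by nlinarith
      have hgt : (-1 : ℝ) < n := by nlinarith
      have hi1 : (-1 : ℤ) < n := by exact_mod_cast hgt
      have hi2 : n < 1 := by exact_mod_cast hlt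
      omega
    rw [hn0] at him
    simpa using him
end
end
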